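/- arXiv:1508.03880 — 8 statements merged into one kernel-verified Lean document; each statement's English description precedes it below -/
import Mathlib

section
/- Let n ≥ 3 be an integer and let k, k₁ > 0 and k₂ be real constants. On the open half-line I = {ξ ∈ ℝ : (2−n)·k₁·ξ + k₂ > 0} (equivalently ξ < k₂/((n−2)k₁)), define φ(ξ) = (2/((2−n)·k₁·ξ + k₂))^(2/(n−2)) and f(ξ) = 2k/((2−n)·k₁·ξ + k₂). Then φ and f are smooth, positive and non-constant on I, and (φ, f) satisfies the Ricci-flat warped-product ODE system of dimension (n, 1) at every point of I. -/
/-- The Ricci-flat warped-product ODE system of dimension `(n, m)` on a set `I`: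
(E1) `(n−2)·f·φ'' − m·φ·f'' − 2m·φ'·f' = 0`,
(E2) `f·φ·φ'' − (n−1)·f·(φ')² + m·φ·φ'·f' = 0`,
(E3) `−f·φ²·f'' + (n−2)·f·φ·φ'·f' − (m−1)·φ²·(f')² = 0`. -/
def WarpedODE (n m : ℕ) (φ f : ℝ → ℝ) (I : Set ℝ) : Prop :=
  ∀ ξ ∈ I,
    (((n : ℝ) - 2) * f ξ * deriv (deriv φ) ξ - (m : ℝ) * φ ξ * deriv (deriv f) ξ
      - 2 * (m : ℝ) * deriv φ ξ * deriv f ξ = 0) ∧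
    (f ξ * φ ξ * deriv (deriv φ) ξ - ((n : ℝ) - 1) * f ξ * (deriv φ ξ) ^ 2
      + (m : ℝ) * φ ξ * deriv φ ξ * deriv f ξ = 0) ∧
    (-(f ξ * (φ ξ) ^ 2 * deriv (deriv f) ξ)
      + ((n : ℝ) - 2) * f ξ * φ ξ * deriv φ ξ * deriv f ξ
      - ((m : ℝ) - 1) * (φ ξ) ^ 2 * (deriv f ξ) ^ 2 = 0)

/-- Forward direction of Theorem 1.3 (fiber dimension m = 1). -/
theorem theorem_1_3_forward (n : ℕ) (hn : 3 ≤ n) (k k₁ k₂ : ℝ) (hk : 0 < k) (hk₁ : 0 < k₁) :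
    let I : Set ℝ := {ξ : ℝ | 0 < (2 - (n : ℝ)) * k₁ * ξ + k₂}
    let φ : ℝ → ℝ := fun ξ => (2 / ((2 - (n : ℝ)) * k₁ * ξ + k₂)) ^ (2 / ((n : ℝ) - 2))
    let f : ℝ → ℝ := fun ξ => 2 * k / ((2 - (n : ℝ)) * k₁ * ξ + k₂)
    ContDiffOn ℝ (⊤ : ℕ∞) φ I ∧ ContDiffOn ℝ (⊤ : ℕ∞) f I ∧
    (∀ ξ ∈ I, 0 < φ ξ) ∧ (∀ ξ ∈ I, 0 < f ξ) ∧
    (¬ ∃ c, ∀ ξ ∈ I, φ ξ = c) ∧ (¬ ∃ c, ∀ ξ ∈ I, f ξ = c) ∧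
    WarpedODE n 1 φ f I := by
  intro I φ f
  have hn3 : (3:ℝ) ≤ (n:ℝ) := by exact_mod_cast hn
  have hn2 : (0:ℝ) < (n:ℝ) - 2 := by linarith
  set a : ℝ := (2 - (n:ℝ)) * k₁ with ha_def
  have ha : a < 0 := mul_neg_of_neg_of_pos (by linarith) hk₁
  have ha0 : a ≠ 0 := ne_of_lt ha
  set p : ℝ := 2 / ((n:ℝ) - 2) with hp_def
  have hp : 0 < p := by positivity
  have hpn : ((n:ℝ) - 2) * p = 2 := by
    rw [hp_def]; field_simp
  set u : ℝ → ℝ := fun ξ => a * ξ + k₂ with hu_def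
  have hφdef : ∀ x, φ x = (2 / u x) ^ p := fun x => rfl
  have hfdef : ∀ x, f x = 2 * k / u x := fun x => rfl
  have hImem : ∀ x, x ∈ I ↔ 0 < u x := fun x => Iff.rfl
  have hucont : Continuous u := by
    exact (continuous_const.mul continuous_id).add continuous_const
  have hIopen : IsOpen I := isOpen_lt continuous_const hucont
  have hu : ∀ x, HasDerivAt u a x := by
    intro x
    have h := ((hasDerivAt_id x).const_mul a).add_const k₂
    rw [mul_one] at h
    exact h
  have hucd : ContDiff ℝ (⊤ : ℕ∞) u := (contDiff_const.mul contDiff_id).add contDiff_const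
  -- auxiliary formulas
  set ψ : ℝ → ℝ := fun x => (2:ℝ) ^ p * (u x) ^ (-p) with hψ_def
  set φ1 : ℝ → ℝ := fun x => (2:ℝ) ^ p * (a * (-p) * (u x) ^ (-p - 1)) with hφ1_def
  set φ2 : ℝ → ℝ := fun x =>
    (2:ℝ) ^ p * ((a * (-p - 1) * (u x) ^ (-p - 1 - 1)) * (a * (-p))) with hφ2_def
  set f1 : ℝ → ℝ := fun x => -(2 * k * a) / (u x) ^ 2 with hf1_def
  set f2 : ℝ → ℝ := fun x => 4 * k * a ^ 2 / (u x) ^ 3 with hf2_def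
  -- derivative facts wherever u x ≠ 0
  have hψd : ∀ x, u x ≠ 0 → HasDerivAt ψ (φ1 x) x := by
    intro x hx
    have h := ((hu x).rpow_const (p := -p) (Or.inl hx)).const_mul ((2:ℝ) ^ p)
    simpa [hψ_def, hφ1_def, mul_comm, mul_assoc, mul_left_comm] using h
  have hφ1d : ∀ x, u x ≠ 0 → HasDerivAt φ1 (φ2 x) x := by
    intro x hx
    have h := (((hu x).rpow_const (p := -p - 1) (Or.inl hx)).const_mul
      (a * (-p))).const_mul ((2:ℝ) ^ p)
    have h2 : HasDerivAt (fun y => (2:ℝ) ^ p * (a * -p * u y ^ (-p - 1)))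
        (2 ^ p * (a * -p * (a * (-p - 1) * u x ^ (-p - 1 - 1)))) x := by
      convert h using 2 <;> first | rfl | ring
    have h3 : φ2 x = 2 ^ p * (a * -p * (a * (-p - 1) * u x ^ (-p - 1 - 1))) := by
      rw [hφ2_def]; ring
    rw [h3]
    exact h2
  have hfd : ∀ x, u x ≠ 0 → HasDerivAt f (f1 x) x := by
    intro x hx
    have h := (hasDerivAt_const x (2 * k)).div (hu x) hx
    have : f1 x = (0 * u x - 2 * k * a) / u x ^ 2 := by rw [hf1_def]; ring
    rw [this]
    exact h
  have hf1d : ∀ x, u x ≠ 0 → HasDerivAt f1 (f2 x) x := by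
    intro x hx
    have h := (hasDerivAt_const x (-(2 * k * a))).div ((hu x).pow 2)
      (pow_ne_zero 2 hx)
    have : f2 x = (0 * u x ^ 2 - -(2 * k * a) * (2 * u x ^ (2 - 1) * a)) / (u x ^ 2) ^ 2 := by
      rw [hf2_def]; field_simp; ring
    rw [this]
    exact h
  -- φ agrees with ψ on I
  have hφψ : ∀ x ∈ I, φ x = ψ x := by
    intro x hx
    have hux : 0 < u x := (hImem x).mp hx
    rw [hφdef, Real.div_rpow (by norm_num) hux.le]
    show (2:ℝ) ^ p / u x ^ p = 2 ^ p * u x ^ (-p)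
    rw [Real.rpow_neg hux.le]; ring
  -- key derivative identities on I
  have hdφ : ∀ x ∈ I, deriv φ x = φ1 x := by
    intro x hx
    have hev : φ =ᶠ[nhds x] ψ := by
      filter_upwards [hIopen.mem_nhds hx] with y hy using hφψ y hy
    rw [hev.deriv_eq]
    exact (hψd x (ne_of_gt ((hImem x).mp hx))).deriv
  have hd2φ : ∀ x ∈ I, deriv (deriv φ) x = φ2 x := by
    intro x hx
    have hev : deriv φ =ᶠ[nhds x] φ1 := by
      filter_upwards [hIopen.mem_nhds hx] with y hy using hdφ y hy
    rw [hev.deriv_eq]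
    exact (hφ1d x (ne_of_gt ((hImem x).mp hx))).deriv
  have hdf : ∀ x ∈ I, deriv f x = f1 x := fun x hx =>
    (hfd x (ne_of_gt ((hImem x).mp hx))).deriv
  have hd2f : ∀ x ∈ I, deriv (deriv f) x = f2 x := by
    intro x hx
    have hev : deriv f =ᶠ[nhds x] f1 := by
      filter_upwards [hIopen.mem_nhds hx] with y hy using hdf y hy
    rw [hev.deriv_eq]
    exact (hf1d x (ne_of_gt ((hImem x).mp hx))).deriv
  refine ⟨?_, ?_, ?_, ?_, ?_, ?_, ?_⟩
  · -- ContDiffOn φ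
    intro x hx
    have hux : 0 < u x := (hImem x).mp hx
    have h1 : ContDiffAt ℝ (⊤ : ℕ∞) (fun y => 2 / u y) x :=
      contDiffAt_const.div hucd.contDiffAt (ne_of_gt hux)
    exact (h1.rpow_const_of_ne (by positivity)).contDiffWithinAt
  · -- ContDiffOn f
    intro x hx
    have hux : 0 < u x := (hImem x).mp hx
    exact (contDiffAt_const.div hucd.contDiffAt (ne_of_gt hux)).contDiffWithinAt
  · intro x hx
    have hux : 0 < u x := (hImem x).mp hx
    rw [hφdef]
    positivity
  · intro x hx
    have hux : 0 < u x := (hImem x).mp hx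
    rw [hfdef]
    positivity
  · -- φ nonconstant
    rintro ⟨c, hc⟩
    have hx1 : ((1 - k₂) / a) ∈ I := by
      rw [hImem]; show 0 < a * ((1 - k₂) / a) + k₂
      rw [mul_div_cancel₀ _ ha0]; norm_num
    have hx2 : ((2 - k₂) / a) ∈ I := by
      rw [hImem]; show 0 < a * ((2 - k₂) / a) + k₂
      rw [mul_div_cancel₀ _ ha0]; norm_num
    have hu1 : u ((1 - k₂) / a) = 1 := by
      show a * ((1 - k₂) / a) + k₂ = 1
      rw [mul_div_cancel₀ _ ha0]; ring
    have hu2 : u ((2 - k₂) / a) = 2 := by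
      show a * ((2 - k₂) / a) + k₂ = 2
      rw [mul_div_cancel₀ _ ha0]; ring
    have hv1 : φ ((1 - k₂) / a) = 2 ^ p := by rw [hφdef, hu1]; norm_num
    have hv2 : φ ((2 - k₂) / a) = 1 := by
      rw [hφdef, hu2]; norm_num
    have h2p : (1:ℝ) < 2 ^ p :=
      (Real.one_lt_rpow_iff_of_pos (by norm_num)).mpr (Or.inl ⟨by norm_num, hp⟩)
    have e1 := hc _ hx1
    have e2 := hc _ hx2
    rw [hv1] at e1; rw [hv2] at e2
    rw [← e2] at e1
    linarith
  · -- f nonconstant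
    rintro ⟨c, hc⟩
    have hx1 : ((1 - k₂) / a) ∈ I := by
      rw [hImem]; show 0 < a * ((1 - k₂) / a) + k₂
      rw [mul_div_cancel₀ _ ha0]; norm_num
    have hx2 : ((2 - k₂) / a) ∈ I := by
      rw [hImem]; show 0 < a * ((2 - k₂) / a) + k₂
      rw [mul_div_cancel₀ _ ha0]; norm_num
    have hu1 : u ((1 - k₂) / a) = 1 := by
      show a * ((1 - k₂) / a) + k₂ = 1
      rw [mul_div_cancel₀ _ ha0]; ring
    have hu2 : u ((2 - k₂) / a) = 2 := by
      show a * ((2 - k₂) / a) + k₂ = 2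
      rw [mul_div_cancel₀ _ ha0]; ring
    have hv1 : f ((1 - k₂) / a) = 2 * k := by rw [hfdef, hu1]; norm_num
    have hv2 : f ((2 - k₂) / a) = k := by rw [hfdef, hu2]; ring
    have e1 := hc _ hx1
    have e2 := hc _ hx2
    rw [hv1] at e1; rw [hv2] at e2
    rw [← e2] at e1
    linarith
  · -- the ODE system
    intro ξ hξ
    have hU : 0 < u ξ := (hImem ξ).mp hξ
    have hU0 : u ξ ≠ 0 := ne_of_gt hU
    rw [hd2φ ξ hξ, hdφ ξ hξ, hd2f ξ hξ, hdf ξ hξ, hφψ ξ hξ]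
    rw [hψ_def, hφ1_def, hφ2_def, hf1_def, hf2_def, hfdef]
    simp only
    set U : ℝ := u ξ with hU_def
    have hUpos : 0 < U := hU
    have hU0' : U ≠ 0 := ne_of_gt hUpos
    set A : ℝ := U ^ (-p) with hA_def
    have e1 : U ^ (-p - 1) = A / U := by
      have h : (-p - 1) = -p + (-1) := by ring
      rw [h, Real.rpow_add hUpos, Real.rpow_neg_one]; rw [hA_def]; ring
    have e2 : U ^ (-p - 1 - 1) = A / U / U := by
      have h : (-p - 1 - 1) = (-p - 1) + (-1) := by ring
      rw [h, Real.rpow_add hUpos, Real.rpow_neg_one, e1]; ring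
    rw [e1, e2]
    clear_value a p u U A
    refine ⟨?_, ?_, ?_⟩
    · push_cast
      linear_combination (2 * k * (2:ℝ)^p * a ^ 2 * (A / U / U / U) * (p + 1)) * hpn
    · push_cast
      linear_combination (-(2 * k * ((2:ℝ)^p)^2 * a^2 * A^2 * p / U^3)) * hpn
    · push_cast
      linear_combination (4 * k^2 * a^2 * ((2:ℝ)^p)^2 * A^2 / U^4) * hpn
end

section
/- Let n ≥ 3 be an integer, I ⊆ ℝ an open interval, and φ, f : I → ℝ smooth non-constant functions with φ > 0 and f > 0 on I. If (φ, f) satisfies the Ricci-flat warped-product ODE system of dimension (n, 1) at every point of I, then there exist real constants k > 0, k₁ ≠ 0 and k₂ such that (2−n)·k₁·ξ + k₂ > 0 for all ξ ∈ I, and φ(ξ) = (2/((2−n)·k₁·ξ + k₂))^(2/(n−2)) and f(ξ) = 2k/((2−n)·k₁·ξ + k₂) for all ξ ∈ I. -/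
/-- A function with vanishing derivative on a convex set is constant there. -/
lemma aux_const_of_deriv_zero {I : Set ℝ} (hIconv : Convex ℝ I) {g g' : ℝ → ℝ}
    (hg : ∀ ξ ∈ I, HasDerivAt g (g' ξ) ξ) (hg0 : ∀ ξ ∈ I, g' ξ = 0)
    {x y : ℝ} (hx : x ∈ I) (hy : y ∈ I) : g x = g y := by
  have h := Convex.norm_image_sub_le_of_norm_hasDerivWithin_le
    (f := g) (f' := g') (s := I) (C := 0)
    (fun ξ hξ => (hg ξ hξ).hasDerivWithinAt)
    (fun ξ hξ => by simp [hg0 ξ hξ]) hIconv hy hx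
  have : ‖g x - g y‖ ≤ 0 := by simpa using h
  have : g x - g y = 0 := by
    have := norm_nonneg (g x - g y)
    have hn : ‖g x - g y‖ = 0 := le_antisymm ‹‖g x - g y‖ ≤ 0› this
    exact norm_eq_zero.mp hn
  linarith [this]

/-- Converse direction of Theorem 1.3 (fiber dimension m = 1). -/
theorem theorem_1_3_converse (n : ℕ) (hn : 3 ≤ n) (I : Set ℝ) (hIopen : IsOpen I)
    (hIconv : Convex ℝ I) (φ f : ℝ → ℝ)
    (hφ : ContDiffOn ℝ (⊤ : ℕ∞) φ I) (hf : ContDiffOn ℝ (⊤ : ℕ∞) f I)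
    (hφpos : ∀ ξ ∈ I, 0 < φ ξ) (hfpos : ∀ ξ ∈ I, 0 < f ξ)
    (hφnc : ¬ ∃ c, ∀ ξ ∈ I, φ ξ = c) (hfnc : ¬ ∃ c, ∀ ξ ∈ I, f ξ = c)
    (hODE : WarpedODE n 1 φ f I) :
    ∃ k k₁ k₂ : ℝ, 0 < k ∧ k₁ ≠ 0 ∧
      (∀ ξ ∈ I, 0 < (2 - (n : ℝ)) * k₁ * ξ + k₂) ∧
      (∀ ξ ∈ I, φ ξ = (2 / ((2 - (n : ℝ)) * k₁ * ξ + k₂)) ^ (2 / ((n : ℝ) - 2))) ∧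
      (∀ ξ ∈ I, f ξ = 2 * k / ((2 - (n : ℝ)) * k₁ * ξ + k₂)) := by
  -- basic numerology
  have hn3 : (3 : ℝ) ≤ (n : ℝ) := by exact_mod_cast hn
  have h2n : (2 : ℝ) - (n : ℝ) ≠ 0 := by linarith
  have hn2 : (n : ℝ) - 2 ≠ 0 := by linarith
  have hn1 : (n : ℝ) - 1 ≠ 0 := by linarith
  -- nonemptiness
  rcases I.eq_empty_or_nonempty with rfl | ⟨ξ₀, hξ₀⟩
  · exact absurd ⟨0, by simp⟩ hφnc
  -- differentiability plumbing
  have hφ1 : ContDiffOn ℝ (⊤ : ℕ∞) (deriv φ) I := hφ.deriv_of_isOpen hIopen (by simp)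
  have hf1 : ContDiffOn ℝ (⊤ : ℕ∞) (deriv f) I := hf.deriv_of_isOpen hIopen (by simp)
  have dφ : ∀ ξ ∈ I, HasDerivAt φ (deriv φ ξ) ξ := fun ξ hξ =>
    ((hφ.differentiableOn (by simp)).differentiableAt (hIopen.mem_nhds hξ)).hasDerivAt
  have df : ∀ ξ ∈ I, HasDerivAt f (deriv f ξ) ξ := fun ξ hξ =>
    ((hf.differentiableOn (by simp)).differentiableAt (hIopen.mem_nhds hξ)).hasDerivAt
  have dφ' : ∀ ξ ∈ I, HasDerivAt (deriv φ) (deriv (deriv φ) ξ) ξ := fun ξ hξ =>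
    ((hφ1.differentiableOn (by simp)).differentiableAt (hIopen.mem_nhds hξ)).hasDerivAt
  have df' : ∀ ξ ∈ I, HasDerivAt (deriv f) (deriv (deriv f) ξ) ξ := fun ξ hξ =>
    ((hf1.differentiableOn (by simp)).differentiableAt (hIopen.mem_nhds hξ)).hasDerivAt
  have hφne : ∀ ξ ∈ I, φ ξ ≠ 0 := fun ξ hξ => (hφpos ξ hξ).ne'
  have hfne : ∀ ξ ∈ I, f ξ ≠ 0 := fun ξ hξ => (hfpos ξ hξ).ne'
  -- pointwise consequences of the ODE system
  have D3 : ∀ ξ ∈ I, φ ξ * deriv (deriv f) ξ = ((n : ℝ) - 2) * deriv φ ξ * deriv f ξ := by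
    intro ξ hξ
    obtain ⟨e1, e2, e3⟩ := hODE ξ hξ
    simp only [Nat.cast_one] at e1 e2 e3
    have key : f ξ * (φ ξ * (((n : ℝ) - 2) * deriv φ ξ * deriv f ξ
        - φ ξ * deriv (deriv f) ξ)) = 0 := by linear_combination e3
    rcases mul_eq_zero.mp key with h | h
    · exact absurd h (hfne ξ hξ)
    rcases mul_eq_zero.mp h with h | h
    · exact absurd h (hφne ξ hξ)
    linarith
  have D1 : ∀ ξ ∈ I, ((n : ℝ) - 2) * f ξ * deriv (deriv φ) ξ
      = (n : ℝ) * deriv φ ξ * deriv f ξ := by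
    intro ξ hξ
    obtain ⟨e1, e2, e3⟩ := hODE ξ hξ
    simp only [Nat.cast_one] at e1 e2 e3
    linear_combination e1 + D3 ξ hξ
  have E2 : ∀ ξ ∈ I, f ξ * φ ξ * deriv (deriv φ) ξ - ((n : ℝ) - 1) * f ξ * (deriv φ ξ) ^ 2
      + φ ξ * deriv φ ξ * deriv f ξ = 0 := by
    intro ξ hξ
    obtain ⟨e1, e2, e3⟩ := hODE ξ hξ
    simp only [Nat.cast_one] at e2
    linear_combination e2
  -- the key quantity G
  set G : ℝ → ℝ := fun ξ => 2 * φ ξ * deriv f ξ - ((n : ℝ) - 2) * f ξ * deriv φ ξ with hGdef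
  have DG : ∀ ξ ∈ I, deriv φ ξ * G ξ = 0 := by
    intro ξ hξ
    have h : ((n : ℝ) - 1) * (deriv φ ξ * G ξ) = 0 := by
      simp only [hGdef]
      linear_combination ((n : ℝ) - 2) * E2 ξ hξ - φ ξ * D1 ξ hξ
    rcases mul_eq_zero.mp h with h' | h'
    · exact absurd h' hn1
    · exact h'
  -- G has zero derivative on I
  have hG0 : ∀ ξ ∈ I, HasDerivAt G 0 ξ := by
    intro ξ hξ
    have h := (((dφ ξ hξ).mul (df' ξ hξ)).const_mul 2).sub
      (((df ξ hξ).mul (dφ' ξ hξ)).const_mul ((n : ℝ) - 2))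
    have e : (2 * (deriv φ ξ * deriv f ξ + φ ξ * deriv (deriv f) ξ) -
        ((n : ℝ) - 2) * (deriv f ξ * deriv φ ξ + f ξ * deriv (deriv φ) ξ)) = 0 := by
      linear_combination 2 * D3 ξ hξ - D1 ξ hξ
    rw [e] at h
    exact h.congr_of_eventuallyEq
      (Filter.Eventually.of_forall fun y => by simp only [hGdef, Pi.sub_apply, Pi.mul_apply]; ring)
  have hGzero : ∀ ξ ∈ I, G ξ = 0 := by
    have hGconst : ∀ ξ ∈ I, G ξ = G ξ₀ := fun ξ hξ =>
      aux_const_of_deriv_zero hIconv (g' := fun _ => 0) hG0 (fun _ _ => rfl) hξ hξ₀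
    by_cases hc : G ξ₀ = 0
    · intro ξ hξ; rw [hGconst ξ hξ, hc]
    · exfalso
      have hφ'0 : ∀ ξ ∈ I, deriv φ ξ = 0 := by
        intro ξ hξ
        have := DG ξ hξ
        rw [hGconst ξ hξ] at this
        rcases mul_eq_zero.mp this with h | h
        · exact h
        · exact absurd h hc
      exact hφnc ⟨φ ξ₀, fun ξ hξ => aux_const_of_deriv_zero hIconv dφ hφ'0 hξ hξ₀⟩
  have hGeq : ∀ ξ ∈ I, 2 * φ ξ * deriv f ξ = ((n : ℝ) - 2) * f ξ * deriv φ ξ := by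
    intro ξ hξ
    have := hGzero ξ hξ
    simp only [hGdef] at this
    linarith
  -- the key second-order relation for φ
  have hH : ∀ ξ ∈ I, 2 * φ ξ * deriv (deriv φ) ξ = (n : ℝ) * (deriv φ ξ) ^ 2 := by
    intro ξ hξ
    have h : ((n : ℝ) - 2) * f ξ * (2 * φ ξ * deriv (deriv φ) ξ - (n : ℝ) * (deriv φ ξ) ^ 2)
        = 0 := by
      linear_combination 2 * φ ξ * D1 ξ hξ + (n : ℝ) * deriv φ ξ * hGeq ξ hξ
    rcases mul_eq_zero.mp h with h' | h'
    · rcases mul_eq_zero.mp h' with h'' | h''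
      · exact absurd h'' hn2
      · exact absurd h'' (hfne ξ hξ)
    · linarith
  -- the substitution v = φ ^ ((2-n)/2)
  set c : ℝ := ((2 : ℝ) - (n : ℝ)) / 2 with hcdef
  set v : ℝ → ℝ := fun ξ => φ ξ ^ c with hvdef
  set v1 : ℝ → ℝ := fun ξ => deriv φ ξ * c * φ ξ ^ (c - 1) with hv1def
  have hvpos : ∀ ξ ∈ I, 0 < v ξ := fun ξ hξ => Real.rpow_pos_of_pos (hφpos ξ hξ) c
  have hv : ∀ ξ ∈ I, HasDerivAt v (v1 ξ) ξ := fun ξ hξ =>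
    (dφ ξ hξ).rpow_const (Or.inl (hφne ξ hξ))
  have hv1 : ∀ ξ ∈ I, HasDerivAt v1 0 ξ := by
    intro ξ hξ
    have h := ((dφ' ξ hξ).mul_const c).mul ((dφ ξ hξ).rpow_const (p := c - 1)
      (Or.inl (hφne ξ hξ)))
    convert h using 1
    · rfl
    · rfl
    · rfl
    have hsplit : φ ξ ^ (c - 1) = φ ξ ^ (c - 1 - 1) * φ ξ := by
      rw [← Real.rpow_add_one (hφne ξ hξ) (c - 1 - 1)]
      norm_num
    rw [hsplit]
    have hc1 : c - 1 = c - 1 - 1 + 1 := by ring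
    linear_combination (-(c / 2) * φ ξ ^ (c - 1 - 1)) * hH ξ hξ
  -- v is affine on I
  set a : ℝ := v1 ξ₀ with hadef
  have hva : ∀ ξ ∈ I, v1 ξ = a := fun ξ hξ =>
    aux_const_of_deriv_zero hIconv (g' := fun _ => 0) hv1 (fun _ _ => rfl) hξ hξ₀
  set b : ℝ := v ξ₀ - a * ξ₀ with hbdef
  have hvb : ∀ ξ ∈ I, v ξ = a * ξ + b := by
    intro ξ hξ
    have hw : ∀ η ∈ I, HasDerivAt (fun η => v η - a * η) (v1 η - a) η := by
      intro η hη
      exact (hv η hη).sub (by simpa using (HasDerivAt.const_mul a (hasDerivAt_id η)))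
    have := aux_const_of_deriv_zero hIconv hw
      (fun η hη => by rw [hva η hη]; ring) hξ hξ₀
    simp only [hbdef]
    linarith [this]
  -- f * v is a positive constant k
  set k : ℝ := f ξ₀ * v ξ₀ with hkdef
  have hkpos : 0 < k := mul_pos (hfpos ξ₀ hξ₀) (hvpos ξ₀ hξ₀)
  have hP : ∀ ξ ∈ I, f ξ * v ξ = k := by
    intro ξ hξ
    have hP0 : ∀ η ∈ I, HasDerivAt (fun η => f η * v η)
        (deriv f η * v η + f η * v1 η) η := fun η hη => (df η hη).mul (hv η hη)
    refine aux_const_of_deriv_zero hIconv hP0 (fun η hη => ?_) hξ hξ₀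
    have hsplit : φ η ^ c = φ η ^ (c - 1) * φ η := by
      rw [← Real.rpow_add_one (hφne η hη) (c - 1)]
      norm_num
    simp only [hvdef, hv1def]
    rw [hsplit]
    linear_combination (φ η ^ (c - 1) / 2) * hGeq η hη
  -- a ≠ 0
  have ha : a ≠ 0 := by
    intro ha0
    apply hfnc
    refine ⟨k / b, fun ξ hξ => ?_⟩
    have hvb' := hvb ξ hξ
    rw [ha0, zero_mul, zero_add] at hvb'
    have hbpos : 0 < b := hvb' ▸ hvpos ξ hξ
    have hbne : b ≠ 0 := hbpos.ne'
    have hthis := hP ξ hξ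
    rw [hvb'] at hthis
    field_simp
    linarith [hthis]
  -- assemble the answer
  refine ⟨k, 2 * a / (2 - (n : ℝ)), 2 * b, hkpos,
    div_ne_zero (mul_ne_zero two_ne_zero ha) h2n, ?_, ?_, ?_⟩
  · intro ξ hξ
    have : (2 - (n : ℝ)) * (2 * a / (2 - (n : ℝ))) * ξ + 2 * b = 2 * v ξ := by
      rw [hvb ξ hξ]; field_simp
    rw [this]
    linarith [hvpos ξ hξ]
  · intro ξ hξ
    have hu : (2 - (n : ℝ)) * (2 * a / (2 - (n : ℝ))) * ξ + 2 * b = 2 * v ξ := by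
      rw [hvb ξ hξ]; field_simp
    rw [hu]
    have hvne : v ξ ≠ 0 := (hvpos ξ hξ).ne'
    have h1 : (2 : ℝ) / (2 * v ξ) = (v ξ)⁻¹ := by
      rw [inv_eq_one_div, div_eq_div_iff (by positivity) hvne]
      ring
    have h2 : (v ξ)⁻¹ = φ ξ ^ (-c) := by
      simp only [hvdef]
      rw [Real.rpow_neg (hφpos ξ hξ).le]
    rw [h1, h2, ← Real.rpow_mul (hφpos ξ hξ).le]
    rw [show -c * (2 / ((n : ℝ) - 2)) = 1 by rw [hcdef]; field_simp; ring]
    rw [Real.rpow_one]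
  · intro ξ hξ
    have hu : (2 - (n : ℝ)) * (2 * a / (2 - (n : ℝ))) * ξ + 2 * b = 2 * v ξ := by
      rw [hvb ξ hξ]; field_simp
    rw [hu]
    have hv0 := (hvpos ξ hξ).ne'
    field_simp
    linear_combination hP ξ hξ
end

section
/- Let n ≥ 3 and m ≥ 2 be integers, set β = √(m(n−1)(m+n−2))/(n−1) and α = (m+β)/(n−2), and let k, k₁ > 0 and k₂ be real constants. On the open half-line I = {ξ ∈ ℝ : k₁·ξ + k₂ < 0}, define φ(ξ) = k·(−β·(k₁·ξ + k₂))^(−α/β) and f(ξ) = (−β·(k₁·ξ + k₂))^(−1/β). Then φ and f are smooth, positive and non-constant on I, and (φ, f) satisfies the Ricci-flat warped-product ODE system of dimension (n, m) at every point of I. -/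
private lemma hasDerivAt_base (β k₁ k₂ : ℝ) (ξ : ℝ) :
    HasDerivAt (fun x : ℝ => -(β * (k₁ * x + k₂))) (-(β * k₁)) ξ := by
  have h : HasDerivAt (fun x : ℝ => k₁ * x + k₂) k₁ ξ := by
    simpa using ((hasDerivAt_id ξ).const_mul k₁).add_const k₂
  exact (h.const_mul β).neg

private lemma hasDerivAt_upow (β k₁ k₂ p : ℝ) {ξ : ℝ} (h : 0 < -(β * (k₁ * ξ + k₂))) :
    HasDerivAt (fun x : ℝ => (-(β * (k₁ * x + k₂))) ^ p)
      (-(β * k₁) * p * (-(β * (k₁ * ξ + k₂))) ^ (p - 1)) ξ :=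
  (hasDerivAt_base β k₁ k₂ ξ).rpow_const (Or.inl (ne_of_gt h))

private lemma hasDerivAt_kupow (β k₁ k₂ p k : ℝ) {ξ : ℝ} (h : 0 < -(β * (k₁ * ξ + k₂))) :
    HasDerivAt (fun x : ℝ => k * (-(β * (k₁ * x + k₂))) ^ p)
      (k * (-(β * k₁) * p * (-(β * (k₁ * ξ + k₂))) ^ (p - 1))) ξ :=
  (hasDerivAt_upow β k₁ k₂ p h).const_mul k

private lemma mem_pos (β k₁ k₂ : ℝ) (hβ : 0 < β) {ξ : ℝ} (hξ : k₁ * ξ + k₂ < 0) :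
    0 < -(β * (k₁ * ξ + k₂)) := by nlinarith [mul_neg_of_pos_of_neg hβ hξ]

private lemma deriv_kupow (β k₁ k₂ p k : ℝ) (hβ : 0 < β) {ξ : ℝ} (hξ : k₁ * ξ + k₂ < 0) :
    deriv (fun x : ℝ => k * (-(β * (k₁ * x + k₂))) ^ p) ξ
      = k * (-(β * k₁) * p * (-(β * (k₁ * ξ + k₂))) ^ (p - 1)) :=
  (hasDerivAt_kupow β k₁ k₂ p k (mem_pos β k₁ k₂ hβ hξ)).deriv

private lemma deriv_upow' (β k₁ k₂ p : ℝ) (hβ : 0 < β) {ξ : ℝ} (hξ : k₁ * ξ + k₂ < 0) :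
    deriv (fun x : ℝ => (-(β * (k₁ * x + k₂))) ^ p) ξ
      = -(β * k₁) * p * (-(β * (k₁ * ξ + k₂))) ^ (p - 1) :=
  (hasDerivAt_upow β k₁ k₂ p (mem_pos β k₁ k₂ hβ hξ)).deriv

private lemma deriv2_kupow (β k₁ k₂ p k : ℝ) (hβ : 0 < β) {ξ : ℝ} (hξ : k₁ * ξ + k₂ < 0) :
    deriv (deriv (fun x : ℝ => k * (-(β * (k₁ * x + k₂))) ^ p)) ξ
      = k * ((β * k₁) ^ 2 * (p * (p - 1)) * (-(β * (k₁ * ξ + k₂))) ^ (p - 2)) := by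
  have hopen : IsOpen {x : ℝ | k₁ * x + k₂ < 0} :=
    isOpen_lt (by fun_prop) continuous_const
  have hev : deriv (fun x : ℝ => k * (-(β * (k₁ * x + k₂))) ^ p)
      =ᶠ[nhds ξ] fun x => (k * (-(β * k₁) * p)) * (-(β * (k₁ * x + k₂))) ^ (p - 1) := by
    filter_upwards [hopen.mem_nhds hξ] with x hx
    rw [deriv_kupow β k₁ k₂ p k hβ hx]; ring
  rw [hev.deriv_eq,
    (hasDerivAt_kupow β k₁ k₂ (p - 1) (k * (-(β * k₁) * p)) (mem_pos β k₁ k₂ hβ hξ)).deriv,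
    show p - 1 - 1 = p - 2 by ring]
  ring

private lemma deriv2_upow (β k₁ k₂ p : ℝ) (hβ : 0 < β) {ξ : ℝ} (hξ : k₁ * ξ + k₂ < 0) :
    deriv (deriv (fun x : ℝ => (-(β * (k₁ * x + k₂))) ^ p)) ξ
      = (β * k₁) ^ 2 * (p * (p - 1)) * (-(β * (k₁ * ξ + k₂))) ^ (p - 2) := by
  have hopen : IsOpen {x : ℝ | k₁ * x + k₂ < 0} :=
    isOpen_lt (by fun_prop) continuous_const
  have hev : deriv (fun x : ℝ => (-(β * (k₁ * x + k₂))) ^ p)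
      =ᶠ[nhds ξ] fun x => (-(β * k₁) * p) * (-(β * (k₁ * x + k₂))) ^ (p - 1) := by
    filter_upwards [hopen.mem_nhds hξ] with x hx
    rw [deriv_upow' β k₁ k₂ p hβ hx]
  rw [hev.deriv_eq,
    (hasDerivAt_kupow β k₁ k₂ (p - 1) (-(β * k₁) * p) (mem_pos β k₁ k₂ hβ hξ)).deriv,
    show p - 1 - 1 = p - 2 by ring]
  ring

set_option maxHeartbeats 1000000 in
/-- Forward direction of Theorem 1.4, '−' branch. -/
theorem theorem_1_4_forward_minus (n m : ℕ) (hn : 3 ≤ n) (hm : 2 ≤ m)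
    (k k₁ k₂ : ℝ) (hk : 0 < k) (hk₁ : 0 < k₁) :
    let β : ℝ := Real.sqrt ((m : ℝ) * ((n : ℝ) - 1) * ((m : ℝ) + (n : ℝ) - 2)) / ((n : ℝ) - 1)
    let α : ℝ := ((m : ℝ) + β) / ((n : ℝ) - 2)
    let I : Set ℝ := {ξ : ℝ | k₁ * ξ + k₂ < 0}
    let φ : ℝ → ℝ := fun ξ => k * (-(β * (k₁ * ξ + k₂))) ^ (-(α / β))
    let f : ℝ → ℝ := fun ξ => (-(β * (k₁ * ξ + k₂))) ^ (-(1 / β))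
    ContDiffOn ℝ (⊤ : ℕ∞) φ I ∧ ContDiffOn ℝ (⊤ : ℕ∞) f I ∧
    (∀ ξ ∈ I, 0 < φ ξ) ∧ (∀ ξ ∈ I, 0 < f ξ) ∧
    (¬ ∃ c, ∀ ξ ∈ I, φ ξ = c) ∧ (¬ ∃ c, ∀ ξ ∈ I, f ξ = c) ∧
    WarpedODE n m φ f I := by
  intro β α I φ f
  have hn3 : (3 : ℝ) ≤ (n : ℝ) := by exact_mod_cast hn
  have hm2 : (2 : ℝ) ≤ (m : ℝ) := by exact_mod_cast hm
  have hn1 : (0 : ℝ) < (n : ℝ) - 1 := by linarith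
  have hn2 : (0 : ℝ) < (n : ℝ) - 2 := by linarith
  have hS : 0 < (m : ℝ) * ((n : ℝ) - 1) * ((m : ℝ) + (n : ℝ) - 2) := by
    have h1 : (0 : ℝ) < (m : ℝ) := by linarith
    have h2 : (0 : ℝ) < (m : ℝ) + (n : ℝ) - 2 := by linarith
    exact mul_pos (mul_pos h1 hn1) h2
  have hβ : 0 < β := div_pos (Real.sqrt_pos.mpr hS) hn1
  have hβ0 : β ≠ 0 := ne_of_gt hβ
  have hβsq : ((n : ℝ) - 1) * β ^ 2 = (m : ℝ) * ((m : ℝ) + (n : ℝ) - 2) := by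
    show ((n : ℝ) - 1) * (Real.sqrt ((m : ℝ) * ((n : ℝ) - 1) * ((m : ℝ) + (n : ℝ) - 2))
      / ((n : ℝ) - 1)) ^ 2 = _
    rw [div_pow, Real.sq_sqrt hS.le]
    field_simp
  have hα1 : ((n : ℝ) - 2) * α = (m : ℝ) + β := by
    show ((n : ℝ) - 2) * (((m : ℝ) + β) / ((n : ℝ) - 2)) = _
    field_simp
  have hαpos : 0 < α := div_pos (by linarith) hn2
  -- the three coefficient identities
  have hC1 : ((n : ℝ) - 2) * (-(α / β)) * (-(α / β) - 1)
      - (m : ℝ) * (-(1 / β)) * (-(1 / β) - 1)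
      - 2 * (m : ℝ) * (-(α / β)) * (-(1 / β)) = 0 := by
    have h' : (((n : ℝ) - 2) * (-(α / β)) * (-(α / β) - 1)
        - (m : ℝ) * (-(1 / β)) * (-(1 / β) - 1)
        - 2 * (m : ℝ) * (-(α / β)) * (-(1 / β))) * (β ^ 2 * (((n : ℝ) - 1) * (((n : ℝ)) - 2)))
        = ((n : ℝ) - 1) * ((n : ℝ) - 2) * (((n : ℝ) - 2) * α * α + ((n : ℝ) - 2) * α * β
          - (m : ℝ) - (m : ℝ) * β - 2 * (m : ℝ) * α) := by
      field_simp
      ring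
    have h'' : ((n : ℝ) - 1) * ((n : ℝ) - 2) * (((n : ℝ) - 2) * α * α + ((n : ℝ) - 2) * α * β
        - (m : ℝ) - (m : ℝ) * β - 2 * (m : ℝ) * α) = 0 := by
      linear_combination (((n : ℝ) - 1) * ((n : ℝ) - 2) * α
        + ((n : ℝ) - 1) * (((n : ℝ) - 1) * β - (m : ℝ))) * hα1 + ((n : ℝ) - 1) * hβsq
    have hne : (β ^ 2 * (((n : ℝ) - 1) * (((n : ℝ)) - 2))) ≠ 0 := by positivity
    exact (mul_eq_zero.mp (h'.trans h'')).resolve_right hne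
  have hC2 : (-(α / β)) * (-(α / β) - 1) - ((n : ℝ) - 1) * (-(α / β)) ^ 2
      + (m : ℝ) * (-(α / β)) * (-(1 / β)) = 0 := by
    have h' : ((-(α / β)) * (-(α / β) - 1) - ((n : ℝ) - 1) * (-(α / β)) ^ 2
        + (m : ℝ) * (-(α / β)) * (-(1 / β))) * β ^ 2
        = α * (((m : ℝ) + β) - ((n : ℝ) - 2) * α) := by
      field_simp
      ring
    have h'' : α * (((m : ℝ) + β) - ((n : ℝ) - 2) * α) = 0 := by
      linear_combination (-α) * hα1
    have hne : (β : ℝ) ^ 2 ≠ 0 := by positivity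
    exact (mul_eq_zero.mp (h'.trans h'')).resolve_right hne
  have hC3 : -((-(1 / β)) * (-(1 / β) - 1)) + ((n : ℝ) - 2) * (-(α / β)) * (-(1 / β))
      - ((m : ℝ) - 1) * (-(1 / β)) ^ 2 = 0 := by
    have h' : (-((-(1 / β)) * (-(1 / β) - 1)) + ((n : ℝ) - 2) * (-(α / β)) * (-(1 / β))
        - ((m : ℝ) - 1) * (-(1 / β)) ^ 2) * β ^ 2
        = ((n : ℝ) - 2) * α - β - (m : ℝ) := by
      field_simp
      ring
    have h'' : ((n : ℝ) - 2) * α - β - (m : ℝ) = 0 := by linear_combination hα1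
    have hne : (β : ℝ) ^ 2 ≠ 0 := by positivity
    exact (mul_eq_zero.mp (h'.trans h'')).resolve_right hne
  have hopen : IsOpen I := isOpen_lt (by fun_prop) continuous_const
  have hupos : ∀ ξ ∈ I, 0 < -(β * (k₁ * ξ + k₂)) := fun ξ hξ => mem_pos β k₁ k₂ hβ hξ
  have hcu : ContDiff ℝ (⊤ : ℕ∞) (fun x : ℝ => -(β * (k₁ * x + k₂))) := by fun_prop
  refine ⟨?_, ?_, ?_, ?_, ?_, ?_, ?_⟩
  · -- smoothness of φ
    intro x hx
    exact (contDiffAt_const.mul ((Real.contDiffAt_rpow_const_of_ne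
      (ne_of_gt (hupos x hx))).comp x hcu.contDiffAt)).contDiffWithinAt
  · intro x hx
    exact ((Real.contDiffAt_rpow_const_of_ne
      (ne_of_gt (hupos x hx))).comp x hcu.contDiffAt).contDiffWithinAt
  · intro ξ hξ
    exact mul_pos hk (Real.rpow_pos_of_pos (hupos ξ hξ) _)
  · intro ξ hξ
    exact Real.rpow_pos_of_pos (hupos ξ hξ) _
  · -- φ non-constant
    rintro ⟨c, hc⟩
    set ξ₀ : ℝ := (-(k₂ + 1)) / k₁ with hξ₀def
    have hξ₀ : k₁ * ξ₀ + k₂ = -1 := by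
      rw [hξ₀def]; field_simp; ring
    have hξ₀I : ξ₀ ∈ I := by show k₁ * ξ₀ + k₂ < 0; rw [hξ₀]; norm_num
    have hlt : k₁ * ξ₀ + k₂ < 0 := hξ₀I
    have hev : φ =ᶠ[nhds ξ₀] fun _ => c := by
      filter_upwards [hopen.mem_nhds hξ₀I] with x hx using hc x hx
    have hzero : deriv φ ξ₀ = 0 := by rw [hev.deriv_eq, deriv_const]
    have hd : deriv φ ξ₀ = k * (-(β * k₁) * (-(α / β))
        * (-(β * (k₁ * ξ₀ + k₂))) ^ (-(α / β) - 1)) :=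
      deriv_kupow β k₁ k₂ (-(α / β)) k hβ hlt
    have hpos : 0 < k * (-(β * k₁) * (-(α / β))
        * (-(β * (k₁ * ξ₀ + k₂))) ^ (-(α / β) - 1)) := by
      apply mul_pos hk
      apply mul_pos _ (Real.rpow_pos_of_pos (hupos ξ₀ hξ₀I) _)
      apply mul_pos_of_neg_of_neg
      · nlinarith [mul_pos hβ hk₁]
      · have : 0 < α / β := div_pos hαpos hβ
        linarith
    rw [hzero] at hd
    exact (ne_of_gt hpos) hd.symm
  · -- f non-constant
    rintro ⟨c, hc⟩
    set ξ₀ : ℝ := (-(k₂ + 1)) / k₁ with hξ₀def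
    have hξ₀ : k₁ * ξ₀ + k₂ = -1 := by
      rw [hξ₀def]; field_simp; ring
    have hξ₀I : ξ₀ ∈ I := by show k₁ * ξ₀ + k₂ < 0; rw [hξ₀]; norm_num
    have hlt : k₁ * ξ₀ + k₂ < 0 := hξ₀I
    have hev : f =ᶠ[nhds ξ₀] fun _ => c := by
      filter_upwards [hopen.mem_nhds hξ₀I] with x hx using hc x hx
    have hzero : deriv f ξ₀ = 0 := by rw [hev.deriv_eq, deriv_const]
    have hd : deriv f ξ₀ = -(β * k₁) * (-(1 / β))
        * (-(β * (k₁ * ξ₀ + k₂))) ^ (-(1 / β) - 1) :=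
      deriv_upow' β k₁ k₂ (-(1 / β)) hβ hlt
    have hpos : 0 < -(β * k₁) * (-(1 / β))
        * (-(β * (k₁ * ξ₀ + k₂))) ^ (-(1 / β) - 1) := by
      apply mul_pos _ (Real.rpow_pos_of_pos (hupos ξ₀ hξ₀I) _)
      apply mul_pos_of_neg_of_neg
      · nlinarith [mul_pos hβ hk₁]
      · have : 0 < 1 / β := by positivity
        linarith
    rw [hzero] at hd
    exact (ne_of_gt hpos) hd.symm
  · -- the ODE system
    intro ξ hξ
    have hlt : k₁ * ξ + k₂ < 0 := hξ
    have hv : 0 < -(β * (k₁ * ξ + k₂)) := hupos ξ hξ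
    have hφ0 : φ ξ = k * (-(β * (k₁ * ξ + k₂))) ^ (-(α / β)) := rfl
    have hf0 : f ξ = (-(β * (k₁ * ξ + k₂))) ^ (-(1 / β)) := rfl
    have hφ1 : deriv φ ξ = k * (-(β * k₁) * (-(α / β))
        * (-(β * (k₁ * ξ + k₂))) ^ (-(α / β) - 1)) :=
      deriv_kupow β k₁ k₂ (-(α / β)) k hβ hlt
    have hf1 : deriv f ξ = -(β * k₁) * (-(1 / β))
        * (-(β * (k₁ * ξ + k₂))) ^ (-(1 / β) - 1) :=
      deriv_upow' β k₁ k₂ (-(1 / β)) hβ hlt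
    have hφ2 : deriv (deriv φ) ξ = k * ((β * k₁) ^ 2 * ((-(α / β)) * (-(α / β) - 1))
        * (-(β * (k₁ * ξ + k₂))) ^ (-(α / β) - 2)) :=
      deriv2_kupow β k₁ k₂ (-(α / β)) k hβ hlt
    have hf2 : deriv (deriv f) ξ = (β * k₁) ^ 2 * ((-(1 / β)) * (-(1 / β) - 1))
        * (-(β * (k₁ * ξ + k₂))) ^ (-(1 / β) - 2) :=
      deriv2_upow β k₁ k₂ (-(1 / β)) hβ hlt
    have eq1 : (-(β * (k₁ * ξ + k₂))) ^ (-(α / β) - 1)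
        = (-(β * (k₁ * ξ + k₂))) ^ (-(α / β)) / (-(β * (k₁ * ξ + k₂))) := by
      rw [Real.rpow_sub hv, Real.rpow_one]
    have eq2 : (-(β * (k₁ * ξ + k₂))) ^ (-(α / β) - 2)
        = (-(β * (k₁ * ξ + k₂))) ^ (-(α / β))
          / ((-(β * (k₁ * ξ + k₂))) * (-(β * (k₁ * ξ + k₂)))) := by
      rw [Real.rpow_sub hv, show ((2 : ℝ)) = ((2 : ℕ) : ℝ) by norm_num,
        Real.rpow_natCast, sq]
    have eq3 : (-(β * (k₁ * ξ + k₂))) ^ (-(1 / β) - 1)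
        = (-(β * (k₁ * ξ + k₂))) ^ (-(1 / β)) / (-(β * (k₁ * ξ + k₂))) := by
      rw [Real.rpow_sub hv, Real.rpow_one]
    have eq4 : (-(β * (k₁ * ξ + k₂))) ^ (-(1 / β) - 2)
        = (-(β * (k₁ * ξ + k₂))) ^ (-(1 / β))
          / ((-(β * (k₁ * ξ + k₂))) * (-(β * (k₁ * ξ + k₂)))) := by
      rw [Real.rpow_sub hv, show ((2 : ℝ)) = ((2 : ℕ) : ℝ) by norm_num,
        Real.rpow_natCast, sq]
    have hvne : (-(β * (k₁ * ξ + k₂))) ≠ 0 := ne_of_gt hv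
    rw [hφ0, hf0, hφ1, hf1, hφ2, hf2, eq1, eq2, eq3, eq4]
    generalize (-(β * (k₁ * ξ + k₂))) ^ (-(α / β)) = A
    generalize (-(β * (k₁ * ξ + k₂))) ^ (-(1 / β)) = B
    generalize -(β * (k₁ * ξ + k₂)) = V
    refine ⟨?_, ?_, ?_⟩
    · linear_combination (k * (β * k₁) ^ 2 * (A / V) * (B / V)) * hC1
    · linear_combination (k ^ 2 * (β * k₁) ^ 2 * (A / V) * (A / V) * B) * hC2
    · linear_combination (k ^ 2 * (β * k₁) ^ 2 * (B / V) * (B / V) * A ^ 2) * hC3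
end

section
/- Let n ≥ 3 and m ≥ 2 be integers, set β = √(m(n−1)(m+n−2))/(n−1) and α = (m−β)/(n−2), and let k, k₁ > 0 and k₂ be real constants. On the open half-line I = {ξ ∈ ℝ : k₁·ξ + k₂ > 0}, define φ(ξ) = k·(β·(k₁·ξ + k₂))^(α/β) and f(ξ) = (β·(k₁·ξ + k₂))^(1/β). Then φ and f are smooth, positive and non-constant on I, and (φ, f) satisfies the Ricci-flat warped-product ODE system of dimension (n, m) at every point of I. -/
private lemma wp_affine_hasDerivAt (β k₁ k₂ ξ : ℝ) :
    HasDerivAt (fun x => β * (k₁ * x + k₂)) (β * k₁) ξ := by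
  simpa using (((hasDerivAt_id ξ).const_mul k₁).add_const k₂).const_mul β

private lemma wp_master_hasDerivAt (β k₁ k₂ K p ξ : ℝ) (h : β * (k₁ * ξ + k₂) ≠ 0) :
    HasDerivAt (fun x => K * (β * (k₁ * x + k₂)) ^ p)
      (K * p * (β * k₁) * (β * (k₁ * ξ + k₂)) ^ (p - 1)) ξ := by
  have h1 := (Real.hasDerivAt_rpow_const (p := p) (Or.inl h)).comp ξ
    (wp_affine_hasDerivAt β k₁ k₂ ξ)
  have h2 := h1.const_mul K
  rw [show K * p * (β * k₁) * (β * (k₁ * ξ + k₂)) ^ (p - 1) = K * (p * (β * (k₁ * ξ + k₂)) ^ (p - 1) * (β * k₁)) by ring]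
  exact h2

private lemma wp_master_deriv (β k₁ k₂ K p ξ : ℝ) (h : β * (k₁ * ξ + k₂) ≠ 0) :
    deriv (fun x => K * (β * (k₁ * x + k₂)) ^ p) ξ
      = K * p * (β * k₁) * (β * (k₁ * ξ + k₂)) ^ (p - 1) :=
  (wp_master_hasDerivAt β k₁ k₂ K p ξ h).deriv

private lemma wp_master_deriv2 (β k₁ k₂ K p ξ : ℝ) (hβ : 0 < β) (h : 0 < k₁ * ξ + k₂) :
    deriv (deriv (fun x => K * (β * (k₁ * x + k₂)) ^ p)) ξ
      = K * p * (p - 1) * (β * k₁) ^ 2 * (β * (k₁ * ξ + k₂)) ^ (p - 2) := by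
  have hopen : IsOpen {x : ℝ | 0 < k₁ * x + k₂} :=
    isOpen_lt continuous_const (by continuity)
  have hev : deriv (fun x => K * (β * (k₁ * x + k₂)) ^ p) =ᶠ[nhds ξ]
      (fun x => (K * p * (β * k₁)) * (β * (k₁ * x + k₂)) ^ (p - 1)) := by
    filter_upwards [hopen.mem_nhds h] with x hx
    rw [wp_master_deriv β k₁ k₂ K p x (ne_of_gt (mul_pos hβ hx))]
  rw [hev.deriv_eq, wp_master_deriv β k₁ k₂ (K * p * (β * k₁)) (p - 1) ξ
    (ne_of_gt (mul_pos hβ h))]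
  ring_nf

set_option maxHeartbeats 1000000 in
/-- Forward direction of Theorem 1.4, '+' branch. -/
theorem theorem_1_4_forward_plus (n m : ℕ) (hn : 3 ≤ n) (hm : 2 ≤ m)
    (k k₁ k₂ : ℝ) (hk : 0 < k) (hk₁ : 0 < k₁) :
    let β : ℝ := Real.sqrt ((m : ℝ) * ((n : ℝ) - 1) * ((m : ℝ) + (n : ℝ) - 2)) / ((n : ℝ) - 1)
    let α : ℝ := ((m : ℝ) - β) / ((n : ℝ) - 2)
    let I : Set ℝ := {ξ : ℝ | 0 < k₁ * ξ + k₂}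
    let φ : ℝ → ℝ := fun ξ => k * (β * (k₁ * ξ + k₂)) ^ (α / β)
    let f : ℝ → ℝ := fun ξ => (β * (k₁ * ξ + k₂)) ^ (1 / β)
    ContDiffOn ℝ (⊤ : ℕ∞) φ I ∧ ContDiffOn ℝ (⊤ : ℕ∞) f I ∧
    (∀ ξ ∈ I, 0 < φ ξ) ∧ (∀ ξ ∈ I, 0 < f ξ) ∧
    (¬ ∃ c, ∀ ξ ∈ I, φ ξ = c) ∧ (¬ ∃ c, ∀ ξ ∈ I, f ξ = c) ∧
    WarpedODE n m φ f I := by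
  intro β α I φ f
  have hβdef : β = Real.sqrt ((m : ℝ) * ((n : ℝ) - 1) * ((m : ℝ) + (n : ℝ) - 2)) / ((n : ℝ) - 1) := rfl
  have hαdef : α = ((m : ℝ) - β) / ((n : ℝ) - 2) := rfl
  have hIdef : I = {ξ : ℝ | 0 < k₁ * ξ + k₂} := rfl
  have hφdef : φ = fun ξ => k * (β * (k₁ * ξ + k₂)) ^ (α / β) := rfl
  have hfdef : f = fun ξ => (β * (k₁ * ξ + k₂)) ^ (1 / β) := rfl
  have hn' : (3:ℝ) ≤ (n:ℝ) := by exact_mod_cast hn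
  have hm' : (2:ℝ) ≤ (m:ℝ) := by exact_mod_cast hm
  have hn1 : (0:ℝ) < (n:ℝ) - 1 := by linarith
  have hn2 : (0:ℝ) < (n:ℝ) - 2 := by linarith
  have hX : (0:ℝ) < (m : ℝ) * ((n : ℝ) - 1) * ((m : ℝ) + (n : ℝ) - 2) := by
    apply mul_pos (mul_pos (by linarith) hn1); linarith
  have hβ : 0 < β := hβdef ▸ div_pos (Real.sqrt_pos.2 hX) hn1
  have hβ2 : β ^ 2 * ((n:ℝ) - 1) = (m:ℝ) * ((m:ℝ) + (n:ℝ) - 2) := by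
    rw [hβdef, div_pow, Real.sq_sqrt hX.le, div_mul_eq_mul_div, div_eq_iff (by positivity)]
    ring
  have hβm : β < (m:ℝ) := by
    rw [hβdef, div_lt_iff₀ hn1, Real.sqrt_lt' (by positivity)]
    nlinarith [mul_pos (mul_pos (show (0:ℝ) < (m:ℝ)*((m:ℝ)-1) by nlinarith) hn1) hn2]
  have hα : 0 < α := hαdef ▸ div_pos (by linarith) hn2
  have hαβ : α * ((n:ℝ) - 2) = (m:ℝ) - β := by
    rw [hαdef]; exact div_mul_cancel₀ _ (ne_of_gt hn2)
  clear_value φ f I α β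
  clear hβdef hαdef
  have hc : 0 < α / β := div_pos hα hβ
  have hf1 : (fun x : ℝ => (β * (k₁ * x + k₂)) ^ (1 / β))
      = fun x => 1 * (β * (k₁ * x + k₂)) ^ (1 / β) := by
    funext x; rw [one_mul]
  -- smoothness
  have hsmooth : ∀ (K p : ℝ), ContDiffOn ℝ (⊤ : ℕ∞) (fun x => K * (β * (k₁ * x + k₂)) ^ p) I := by
    intro K p x hx
    rw [hIdef] at hx
    have hx' : 0 < k₁ * x + k₂ := hx
    have h1 : ContDiffAt ℝ (⊤ : ℕ∞) (fun y : ℝ => y ^ p) (β * (k₁ * x + k₂)) :=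
      Real.contDiffAt_rpow_const_of_ne (ne_of_gt (mul_pos hβ hx'))
    have h2 : ContDiffAt ℝ (⊤ : ℕ∞) (fun x : ℝ => β * (k₁ * x + k₂)) x :=
      (contDiff_const.mul ((contDiff_const.mul contDiff_id).add contDiff_const)).contDiffAt
    exact (contDiffAt_const.mul (h1.comp x h2)).contDiffWithinAt
  refine ⟨hφdef ▸ hsmooth k (α/β), by rw [hfdef, hf1]; exact hsmooth 1 (1/β), ?_, ?_, ?_, ?_, ?_⟩
  · intro ξ hξ
    rw [hIdef] at hξ
    have hξ' : 0 < k₁ * ξ + k₂ := hξ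
    rw [hφdef]
    exact mul_pos hk (Real.rpow_pos_of_pos (mul_pos hβ hξ') _)
  · intro ξ hξ
    rw [hIdef] at hξ
    have hξ' : 0 < k₁ * ξ + k₂ := hξ
    rw [hfdef]
    exact Real.rpow_pos_of_pos (mul_pos hβ hξ') _
  · -- φ not constant
    rintro ⟨c, hcst⟩
    set ξ₁ : ℝ := (1/β - k₂)/k₁ with hξ₁
    set ξ₂ : ℝ := (2/β - k₂)/k₁ with hξ₂
    have ha1 : k₁ * ξ₁ + k₂ = 1/β := by
      rw [hξ₁, mul_div_cancel₀ _ hk₁.ne']; ring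
    have ha2 : k₁ * ξ₂ + k₂ = 2/β := by
      rw [hξ₂, mul_div_cancel₀ _ hk₁.ne']; ring
    have h1 : β * (k₁ * ξ₁ + k₂) = 1 := by
      rw [ha1]; field_simp
    have h2 : β * (k₁ * ξ₂ + k₂) = 2 := by
      rw [ha2]; field_simp
    have hm1 : ξ₁ ∈ I := by
      rw [hIdef]; show 0 < k₁ * ξ₁ + k₂
      rw [ha1]; positivity
    have hm2 : ξ₂ ∈ I := by
      rw [hIdef]; show 0 < k₁ * ξ₂ + k₂
      rw [ha2]; positivity
    have e1 : φ ξ₁ = k := by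
      rw [hφdef]
      show k * (β * (k₁ * ξ₁ + k₂)) ^ (α/β) = k
      rw [h1, Real.one_rpow, mul_one]
    have e2 : k < φ ξ₂ := by
      rw [hφdef]
      show k < k * (β * (k₁ * ξ₂ + k₂)) ^ (α/β)
      rw [h2]
      nlinarith [(Real.one_lt_rpow_iff_of_pos (show (0:ℝ) < 2 by norm_num) (y := α/β)).2
        (Or.inl ⟨one_lt_two, hc⟩)]
    rw [hcst ξ₁ hm1] at e1
    rw [hcst ξ₂ hm2] at e2
    linarith
  · -- f not constant
    rintro ⟨c, hcst⟩
    set ξ₁ : ℝ := (1/β - k₂)/k₁ with hξ₁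
    set ξ₂ : ℝ := (2/β - k₂)/k₁ with hξ₂
    have ha1 : k₁ * ξ₁ + k₂ = 1/β := by
      rw [hξ₁, mul_div_cancel₀ _ hk₁.ne']; ring
    have ha2 : k₁ * ξ₂ + k₂ = 2/β := by
      rw [hξ₂, mul_div_cancel₀ _ hk₁.ne']; ring
    have h1 : β * (k₁ * ξ₁ + k₂) = 1 := by
      rw [ha1]; field_simp
    have h2 : β * (k₁ * ξ₂ + k₂) = 2 := by
      rw [ha2]; field_simp
    have hm1 : ξ₁ ∈ I := by
      rw [hIdef]; show 0 < k₁ * ξ₁ + k₂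
      rw [ha1]; positivity
    have hm2 : ξ₂ ∈ I := by
      rw [hIdef]; show 0 < k₁ * ξ₂ + k₂
      rw [ha2]; positivity
    have e1 : f ξ₁ = 1 := by
      rw [hfdef]
      show (β * (k₁ * ξ₁ + k₂)) ^ ((1:ℝ)/β) = 1
      rw [h1, Real.one_rpow]
    have e2 : (1:ℝ) < f ξ₂ := by
      rw [hfdef]
      show (1:ℝ) < (β * (k₁ * ξ₂ + k₂)) ^ ((1:ℝ)/β)
      rw [h2]
      exact (Real.one_lt_rpow_iff_of_pos (by norm_num)).2
        (Or.inl ⟨one_lt_two, by positivity⟩)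
    rw [hcst ξ₁ hm1] at e1
    rw [hcst ξ₂ hm2] at e2
    linarith
  · -- the ODE system
    intro ξ hξ
    rw [hIdef] at hξ
    have hξ' : 0 < k₁ * ξ + k₂ := hξ
    have ht : 0 < β * (k₁ * ξ + k₂) := mul_pos hβ hξ'
    obtain ⟨t, A, B, htdef, hAdef, hBdef⟩ :
        ∃ t A B, t = β * (k₁ * ξ + k₂) ∧ A = t ^ (α/β) ∧ B = t ^ ((1:ℝ)/β) :=
      ⟨_, _, _, rfl, rfl, rfl⟩
    have ht' : 0 < t := htdef ▸ ht
    have eA1 : t ^ (α/β - 1) = A / t := by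
      rw [hAdef, Real.rpow_sub ht', Real.rpow_one]
    have eA2 : t ^ (α/β - 2) = A / t^2 := by
      rw [show α/β - 2 = (α/β - 1) - 1 by ring, Real.rpow_sub ht', Real.rpow_one, eA1]
      ring
    have eB1 : t ^ ((1:ℝ)/β - 1) = B / t := by
      rw [hBdef, Real.rpow_sub ht', Real.rpow_one]
    have eB2 : t ^ ((1:ℝ)/β - 2) = B / t^2 := by
      rw [show (1:ℝ)/β - 2 = ((1:ℝ)/β - 1) - 1 by ring, Real.rpow_sub ht', Real.rpow_one, eB1]
      ring
    have hφ0 : φ ξ = k * A := by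
      rw [hφdef, hAdef, htdef]
    have hf0 : f ξ = B := by
      rw [hfdef, hBdef, htdef]
    have hφ1 : deriv φ ξ = k * α * k₁ * A / t := by
      rw [hφdef, wp_master_deriv β k₁ k₂ k (α/β) ξ ht.ne', ← htdef, eA1]
      field_simp
    have hφ2 : deriv (deriv φ) ξ = k * α * (α - β) * k₁^2 * A / t^2 := by
      rw [hφdef, wp_master_deriv2 β k₁ k₂ k (α/β) ξ hβ hξ', ← htdef, eA2]
      field_simp
    have hfd1 : deriv f ξ = k₁ * B / t := by
      rw [hfdef, hf1, wp_master_deriv β k₁ k₂ 1 ((1:ℝ)/β) ξ ht.ne', ← htdef, eB1]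
      field_simp
    have hfd2 : deriv (deriv f) ξ = (1 - β) * k₁^2 * B / t^2 := by
      rw [hfdef, hf1, wp_master_deriv2 β k₁ k₂ 1 ((1:ℝ)/β) ξ hβ hξ', ← htdef, eB2]
      field_simp
    have key1 : ((n:ℝ)-2)*α*(α-β) - (m:ℝ)*(1-β) - 2*(m:ℝ)*α = 0 := by
      have h2 : ((n:ℝ)-2) * (((n:ℝ)-2)*α*(α-β) - (m:ℝ)*(1-β) - 2*(m:ℝ)*α) = 0 := by
        linear_combination (((n:ℝ)-2)*(α-β) - ((m:ℝ)+β)) * hαβ + hβ2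
      exact (mul_eq_zero.mp h2).resolve_left hn2.ne'
    have key2 : (m:ℝ) - β - ((n:ℝ)-2)*α = 0 := by linear_combination -hαβ
    rw [hφ0, hf0, hφ1, hφ2, hfd1, hfd2]
    refine ⟨?_, ?_, ?_⟩
    · field_simp
      linear_combination (k * k₁^2 * A * B) * key1
    · field_simp
      linear_combination (k^2 * k₁^2 * A^2 * B * α) * key2
    · field_simp
      linear_combination (-(k^2 * k₁^2 * A^2 * B^2)) * key2
end

section
/- Let n ≥ 3 and m ≥ 2 be integers and set β = √(m(n−1)(m+n−2))/(n−1). Let I ⊆ ℝ be an open interval and φ, f : I → ℝ smooth non-constant functions with φ > 0 and f > 0 on I satisfying the Ricci-flat warped-product ODE system of dimension (n, m) at every point of I. Then there exist real constants k > 0, k₁ ≠ 0 and k₂ such that one of the following holds: either (i) with α = (m+β)/(n−2), one has −β·(k₁·ξ + k₂) > 0, φ(ξ) = k·(−β·(k₁·ξ + k₂))^(−α/β) and f(ξ) = (−β·(k₁·ξ + k₂))^(−1/β) for all ξ ∈ I; or (ii) with α = (m−β)/(n−2), one has β·(k₁·ξ + k₂) > 0, φ(ξ) = k·(β·(k₁·ξ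 + k₂))^(α/β) and f(ξ) = (β·(k₁·ξ + k₂))^(1/β) for all ξ ∈ I. -/
open Set Real

lemma constOn_of_hasDerivAt_zero {I : Set ℝ} (hconv : Convex ℝ I) {g : ℝ → ℝ}
    (hg : ∀ ξ ∈ I, HasDerivAt g 0 ξ) {x y : ℝ} (hx : x ∈ I) (hy : y ∈ I) : g x = g y := by
  have h := Convex.norm_image_sub_le_of_norm_hasDerivWithin_le
    (C := 0) (f' := fun _ => (0:ℝ)) (fun ξ hξ => (hg ξ hξ).hasDerivWithinAt)
    (fun ξ _ => by simp) hconv hy hx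
  simpa [sub_eq_zero] using h

/-- Converse direction of Theorem 1.4. -/
theorem theorem_1_4_converse (n m : ℕ) (hn : 3 ≤ n) (hm : 2 ≤ m)
    (I : Set ℝ) (hIopen : IsOpen I) (hIconv : Convex ℝ I) (φ f : ℝ → ℝ)
    (hφ : ContDiffOn ℝ (⊤ : ℕ∞) φ I) (hf : ContDiffOn ℝ (⊤ : ℕ∞) f I)
    (hφpos : ∀ ξ ∈ I, 0 < φ ξ) (hfpos : ∀ ξ ∈ I, 0 < f ξ)
    (hφnc : ¬ ∃ c, ∀ ξ ∈ I, φ ξ = c) (hfnc : ¬ ∃ c, ∀ ξ ∈ I, f ξ = c)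
    (hODE : WarpedODE n m φ f I) :
    let β : ℝ := Real.sqrt ((m : ℝ) * ((n : ℝ) - 1) * ((m : ℝ) + (n : ℝ) - 2)) / ((n : ℝ) - 1)
    ∃ k k₁ k₂ : ℝ, 0 < k ∧ k₁ ≠ 0 ∧
      (( let α : ℝ := ((m : ℝ) + β) / ((n : ℝ) - 2)
         (∀ ξ ∈ I, 0 < -(β * (k₁ * ξ + k₂))) ∧
         (∀ ξ ∈ I, φ ξ = k * (-(β * (k₁ * ξ + k₂))) ^ (-(α / β))) ∧
         (∀ ξ ∈ I, f ξ = (-(β * (k₁ * ξ + k₂))) ^ (-(1 / β))) ) ∨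
       ( let α : ℝ := ((m : ℝ) - β) / ((n : ℝ) - 2)
         (∀ ξ ∈ I, 0 < β * (k₁ * ξ + k₂)) ∧
         (∀ ξ ∈ I, φ ξ = k * (β * (k₁ * ξ + k₂)) ^ (α / β)) ∧
         (∀ ξ ∈ I, f ξ = (β * (k₁ * ξ + k₂)) ^ (1 / β)) )) := by
  intro β
  have hβdef : β = Real.sqrt ((m : ℝ) * ((n : ℝ) - 1) * ((m : ℝ) + (n : ℝ) - 2)) / ((n : ℝ) - 1) := rfl
  have hn3 : (3:ℝ) ≤ (n:ℝ) := by exact_mod_cast hn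
  have hm2 : (2:ℝ) ≤ (m:ℝ) := by exact_mod_cast hm
  have hn1pos : (0:ℝ) < (n:ℝ) - 1 := by linarith
  have hn2pos : (0:ℝ) < (n:ℝ) - 2 := by linarith
  have hargpos : (0:ℝ) < (m:ℝ) * ((n:ℝ) - 1) * ((m:ℝ) + (n:ℝ) - 2) :=
    mul_pos (mul_pos (by linarith) hn1pos) (by linarith)
  have hβpos : 0 < β := by
    rw [hβdef]; exact div_pos (Real.sqrt_pos.2 hargpos) hn1pos
  have hβsq : ((n:ℝ)-1) * β ^ 2 = (m:ℝ) * ((m:ℝ) + (n:ℝ) - 2) := by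
    rw [hβdef, div_pow, Real.sq_sqrt hargpos.le]
    field_simp
  obtain ⟨ξ₀, hξ₀⟩ : I.Nonempty := by
    by_contra h
    exact hfnc ⟨0, fun ξ hξ => absurd ⟨ξ, hξ⟩ h⟩
  -- derivatives
  have hf' : ∀ ξ ∈ I, HasDerivAt f (deriv f ξ) ξ := fun ξ hξ =>
    ((hf.differentiableOn (by simp)).differentiableAt (hIopen.mem_nhds hξ)).hasDerivAt
  have hφ' : ∀ ξ ∈ I, HasDerivAt φ (deriv φ ξ) ξ := fun ξ hξ =>
    ((hφ.differentiableOn (by simp)).differentiableAt (hIopen.mem_nhds hξ)).hasDerivAt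
  have hfD : ContDiffOn ℝ (⊤ : ℕ∞) (deriv f) I := hf.deriv_of_isOpen hIopen (by simp)
  have hf'' : ∀ ξ ∈ I, HasDerivAt (deriv f) (deriv (deriv f) ξ) ξ := fun ξ hξ =>
    ((hfD.differentiableOn (by simp)).differentiableAt (hIopen.mem_nhds hξ)).hasDerivAt
  have hfc' : ContinuousOn (deriv f) I := hfD.continuousOn
  have hfDD : ContDiffOn ℝ (⊤ : ℕ∞) (deriv (deriv f)) I := hfD.deriv_of_isOpen hIopen (by simp)
  have hfc'' : ContinuousOn (deriv (deriv f)) I := hfDD.continuousOn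
  have hfcont : ContinuousOn f I := hf.continuousOn
  -- the key pointwise quadratic relation for f
  have hkey : ∀ ξ ∈ I, (f ξ * deriv (deriv f) ξ - (deriv f ξ)^2)^2 = β^2 * (deriv f ξ)^4 := by
    intro ξ hξ
    obtain ⟨e1, e2, e3⟩ := hODE ξ hξ
    have hφx := hφpos ξ hξ
    have big : (((n:ℝ)-1) * (φ ξ)^4) *
        ((f ξ * deriv (deriv f) ξ - (deriv f ξ)^2)^2 - β^2 * (deriv f ξ)^4) = 0 := by
      linear_combination (((n:ℝ)-2) * (φ ξ)^3 * f ξ * (deriv f ξ)^2) * e1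
        - (((n:ℝ)-2)^2 * (φ ξ)^2 * f ξ * (deriv f ξ)^2) * e2
        + (-(m:ℝ)*((n:ℝ)-2)*(φ ξ)^2*(deriv f ξ)^2
            + ((n:ℝ)-1)*(-(f ξ)*(φ ξ)^2*(deriv (deriv f) ξ)
              - ((n:ℝ)-2)*(f ξ)*(φ ξ)*(deriv φ ξ)*(deriv f ξ)
              + ((m:ℝ)+1)*(φ ξ)^2*(deriv f ξ)^2)) * e3
        - ((φ ξ)^4 * (deriv f ξ)^4) * hβsq
    have hne : (((n:ℝ)-1) * (φ ξ)^4) ≠ 0 := by positivity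
    have h0 := (mul_eq_zero.1 big).resolve_left hne
    linarith [h0]
  -- deriv f never vanishes on I
  have habs : ∀ x ∈ I, |f x * deriv (deriv f) x| ≤ (1+β) * (deriv f x)^2 := by
    intro x hx
    have hk := hkey x hx
    have h2 : (f x * deriv (deriv f) x - (deriv f x)^2)^2 = (β * (deriv f x)^2)^2 := by
      rw [hk]; ring
    have h3 : |f x * deriv (deriv f) x - (deriv f x)^2| = β * (deriv f x)^2 := by
      rcases sq_eq_sq_iff_eq_or_eq_neg.1 h2 with h | h
      · rw [h, abs_of_nonneg (by positivity)]
      · rw [h, abs_neg, abs_of_nonneg (by positivity)]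
    calc |f x * deriv (deriv f) x|
        = |(f x * deriv (deriv f) x - (deriv f x)^2) + (deriv f x)^2| := by ring_nf
      _ ≤ |f x * deriv (deriv f) x - (deriv f x)^2| + |(deriv f x)^2| := abs_add_le _ _
      _ ≤ β * (deriv f x)^2 + (deriv f x)^2 := by rw [h3, abs_of_nonneg (sq_nonneg _)]
      _ = (1+β) * (deriv f x)^2 := by ring
  have hZopen : ∀ ζ ∈ I, deriv f ζ = 0 →
      ∃ r > 0, Metric.ball ζ r ⊆ I ∧ ∀ x ∈ Metric.ball ζ r, deriv f x = 0 := by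
    intro ζ hζ hζ0
    obtain ⟨ε, hε, hball⟩ := Metric.isOpen_iff.1 hIopen ζ hζ
    refine ⟨ε/2, half_pos hε, fun x hx => hball (Metric.ball_subset_ball (by linarith) hx), ?_⟩
    set r := ε/2 with hrdef
    have hr : 0 < r := half_pos hε
    have hJI : Icc (ζ - r) (ζ + r) ⊆ I := by
      intro x hx
      rw [mem_Icc] at hx
      apply hball
      rw [Metric.mem_ball, Real.dist_eq]
      have : |x - ζ| ≤ r := abs_le.2 ⟨by linarith [hx.1], by linarith [hx.2]⟩
      linarith
    have hJne : (Icc (ζ - r) (ζ + r)).Nonempty := ⟨ζ, by rw [mem_Icc]; constructor <;> linarith⟩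
    obtain ⟨z, hz, hzmin⟩ := isCompact_Icc.exists_isMinOn hJne (hfcont.mono hJI)
    obtain ⟨w, hw, hwmax⟩ := isCompact_Icc.exists_isMaxOn hJne ((hfc'.mono hJI).abs)
    have hcc : 0 < f z := hfpos z (hJI hz)
    set M := |deriv f w| with hM
    set K := (1+β) * M / f z with hK
    have hKc : K * f z = (1+β) * M := div_mul_cancel₀ _ hcc.ne'
    have hbound : ∀ x ∈ Icc (ζ-r) (ζ+r), ‖deriv (deriv f) x‖ ≤ K * ‖deriv f x‖ + 0 := by
      intro x hx
      have h1 := habs x (hJI hx)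
      have h2 : f z ≤ f x := hzmin hx
      have h3 : |deriv f x| ≤ M := hwmax hx
      rw [Real.norm_eq_abs, Real.norm_eq_abs, add_zero]
      have h4 : f x * |deriv (deriv f) x| ≤ (1+β) * (deriv f x)^2 := by
        rw [← abs_of_pos (hfpos x (hJI hx)), ← abs_mul]; exact h1
      have h6 : f z * |deriv (deriv f) x| ≤ f x * |deriv (deriv f) x| :=
        mul_le_mul_of_nonneg_right h2 (abs_nonneg _)
      have h7 : (1+β) * (deriv f x)^2 ≤ (1+β) * M * |deriv f x| := by
        have h5 : (deriv f x)^2 = |deriv f x| * |deriv f x| := by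
          rw [← abs_mul, abs_of_nonneg (mul_self_nonneg _), pow_two]
        have h5b : |deriv f x| * |deriv f x| ≤ M * |deriv f x| :=
          mul_le_mul_of_nonneg_right h3 (abs_nonneg _)
        calc (1+β) * (deriv f x)^2 = (1+β) * (|deriv f x| * |deriv f x|) := by rw [h5]
          _ ≤ (1+β) * (M * |deriv f x|) :=
              mul_le_mul_of_nonneg_left h5b (by positivity)
          _ = (1+β) * M * |deriv f x| := by ring
      have h8 : f z * |deriv (deriv f) x| ≤ K * f z * |deriv f x| :=
        (h6.trans (h4.trans h7)).trans (le_of_eq (by rw [hKc]))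
      nlinarith [h8, hcc, abs_nonneg (deriv f x)]
    have hsub1 : Icc ζ (ζ+r) ⊆ Icc (ζ-r) (ζ+r) := Icc_subset_Icc (by linarith) le_rfl
    have hright := norm_le_gronwallBound_of_norm_deriv_right_le (a := ζ) (b := ζ + r)
      (δ := 0) (K := K) (ε := 0) (f := deriv f) (f' := deriv (deriv f))
      (hfc'.mono (fun y hy => hJI (hsub1 hy)))
      (fun x hx => ((hf'' x (hJI (hsub1 (Ico_subset_Icc_self hx)))).hasDerivWithinAt))
      (by simp [hζ0]) (fun x hx => hbound x (hsub1 (Ico_subset_Icc_self hx)))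
    have hmemrefl : ∀ x ∈ Icc ζ (ζ+r), (2*ζ - x) ∈ Icc (ζ-r) (ζ+r) := by
      intro x hx
      rw [mem_Icc] at hx ⊢
      constructor <;> linarith [hx.1, hx.2]
    have hleft := norm_le_gronwallBound_of_norm_deriv_right_le (a := ζ) (b := ζ + r)
      (δ := 0) (K := K) (ε := 0) (f := fun t => deriv f (2*ζ - t))
      (f' := fun t => deriv (deriv f) (2*ζ - t) * (0 - 1))
      (((hfc'.mono (fun y hy => hJI hy)).comp
        ((continuous_const.sub continuous_id).continuousOn)
        (fun x hx => hmemrefl x hx)))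
      (fun x hx => (((hf'' (2*ζ - x) (hJI (hmemrefl x (Ico_subset_Icc_self hx)))).comp x
        ((hasDerivAt_const x (2*ζ)).sub (hasDerivAt_id x))).hasDerivWithinAt))
      (by have h14 : (2:ℝ)*ζ - ζ = ζ := by ring
          norm_num [h14, hζ0])
      (fun x hx => by
        simpa using hbound (2*ζ - x) (hmemrefl x (Ico_subset_Icc_self hx)))
    intro x hx
    rw [Metric.mem_ball, Real.dist_eq] at hx
    rcases le_or_gt ζ x with hc | hc
    · have := hright x ⟨hc, by rw [abs_lt] at hx; linarith [hx.2]⟩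
      rw [gronwallBound_ε0_δ0, Real.norm_eq_abs] at this
      exact abs_nonpos_iff.1 this
    · have hx2 : 2*ζ - x ∈ Icc ζ (ζ+r) := by
        rw [mem_Icc]; rw [abs_lt] at hx
        constructor <;> linarith [hx.1]
      have h12 := hleft (2*ζ - x) hx2
      rw [gronwallBound_ε0_δ0] at h12
      have h13 : ‖deriv f x‖ ≤ 0 := by
        simpa [show 2*ζ - (2*ζ - x) = x from by ring] using h12
      exact norm_le_zero_iff.1 h13
  have hfne : ∀ ξ ∈ I, deriv f ξ ≠ 0 := by
    by_contra hcon
    push_neg at hcon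
    obtain ⟨ζ, hζI, hζ0⟩ := hcon
    set Z : Set ℝ := {x | x ∈ I ∧ deriv f x = 0} with hZdef
    set U : Set ℝ := {x | x ∈ I ∧ deriv f x ≠ 0} with hUdef
    have hZo : IsOpen Z := by
      rw [Metric.isOpen_iff]
      rintro x ⟨hxI, hx0⟩
      obtain ⟨r, hr, hball, hzero⟩ := hZopen x hxI hx0
      exact ⟨r, hr, fun y hy => ⟨hball hy, hzero y hy⟩⟩
    have hUo : IsOpen U := by
      rw [isOpen_iff_mem_nhds]
      rintro x ⟨hxI, hx0⟩
      have h1 : ∀ᶠ y in nhds x, deriv f y ≠ 0 :=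
        (hfc'.continuousAt (hIopen.mem_nhds hxI)).eventually_ne hx0
      filter_upwards [h1, hIopen.mem_nhds hxI] with y hy1 hy2
      exact ⟨hy2, hy1⟩
    have hUne : (I ∩ U).Nonempty := by
      by_contra hU
      rw [Set.not_nonempty_iff_eq_empty] at hU
      apply hfnc
      refine ⟨f ξ₀, fun ξ hξ => ?_⟩
      have hz : ∀ x ∈ I, deriv f x = 0 := by
        intro x hx
        by_contra hne
        have : x ∈ I ∩ U := ⟨hx, hx, hne⟩
        rw [hU] at this
        exact this
      exact constOn_of_hasDerivAt_zero hIconv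
        (fun x hx => hz x hx ▸ hf' x hx) hξ hξ₀
    obtain ⟨x, hxI, ⟨-, hx1⟩, ⟨-, hx2⟩⟩ := hIconv.isPreconnected U Z hUo hZo
      (fun x hx => by
        by_cases h : deriv f x = 0
        exacts [Or.inr ⟨hx, h⟩, Or.inl ⟨hx, h⟩]) hUne ⟨ζ, hζI, hζI, hζ0⟩
    exact hx1 hx2
  -- dichotomy
  have hsplit : ∀ x ∈ I, f x * deriv (deriv f) x - (deriv f x)^2 = β * (deriv f x)^2
      ∨ f x * deriv (deriv f) x - (deriv f x)^2 = -β * (deriv f x)^2 := by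
    intro x hx
    have hk := hkey x hx
    have h2 : (f x * deriv (deriv f) x - (deriv f x)^2 - β*(deriv f x)^2)
        * (f x * deriv (deriv f) x - (deriv f x)^2 + β*(deriv f x)^2) = 0 := by
      linear_combination hk
    rcases mul_eq_zero.1 h2 with h | h
    · left; linarith
    · right; linarith
  have hdichot : (∀ ξ ∈ I, f ξ * deriv (deriv f) ξ - (deriv f ξ)^2 = β * (deriv f ξ)^2)
               ∨ (∀ ξ ∈ I, f ξ * deriv (deriv f) ξ - (deriv f ξ)^2 = -β * (deriv f ξ)^2) := by
    set A : Set ℝ := {x | x ∈ I ∧ f x * deriv (deriv f) x - (deriv f x)^2 ≠ -β * (deriv f x)^2}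
      with hA
    set B : Set ℝ := {x | x ∈ I ∧ f x * deriv (deriv f) x - (deriv f x)^2 ≠ β * (deriv f x)^2}
      with hB
    have hopen : ∀ c : ℝ, IsOpen {x | x ∈ I ∧ f x * deriv (deriv f) x - (deriv f x)^2 ≠ c * (deriv f x)^2} := by
      intro c
      rw [isOpen_iff_mem_nhds]
      rintro x ⟨hxI, hx⟩
      have c1 : ContinuousAt f x := hfcont.continuousAt (hIopen.mem_nhds hxI)
      have c2 : ContinuousAt (deriv f) x := hfc'.continuousAt (hIopen.mem_nhds hxI)
      have c3 : ContinuousAt (deriv (deriv f)) x := hfc''.continuousAt (hIopen.mem_nhds hxI)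
      have hcont : ContinuousAt
          (fun y => f y * deriv (deriv f) y - (deriv f y)^2 - c * (deriv f y)^2) x :=
        ((c1.mul c3).sub (c2.pow 2)).sub (continuousAt_const.mul (c2.pow 2))
      have h1 := hcont.eventually_ne (sub_ne_zero.2 hx)
      filter_upwards [h1, hIopen.mem_nhds hxI] with y hy1 hy2
      exact ⟨hy2, sub_ne_zero.1 hy1⟩
    have hAo : IsOpen A := hopen (-β)
    have hBo : IsOpen B := hopen β
    have hcover : ∀ x ∈ I, x ∈ A ∪ B := by
      intro x hx
      have hne2 : β * (deriv f x)^2 ≠ -β * (deriv f x)^2 := by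
        have := hfne x hx
        intro h; apply this
        have : 2 * β * (deriv f x)^2 = 0 := by linarith
        have h4 : (deriv f x)^2 = 0 := by
          rcases mul_eq_zero.1 this with h5 | h5
          · exact absurd h5 (by positivity)
          · exact h5
        exact pow_eq_zero_iff (by norm_num) |>.1 h4
      rcases hsplit x hx with h | h
      · left; exact ⟨hx, by rw [h]; exact hne2⟩
      · right; exact ⟨hx, by rw [h]; exact (Ne.symm hne2)⟩
    by_cases hBne : (I ∩ B).Nonempty
    · by_cases hAne : (I ∩ A).Nonempty
      · exfalso
        obtain ⟨x, hxI, ⟨-, h1⟩, ⟨-, h2⟩⟩ :=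
          hIconv.isPreconnected A B hAo hBo (fun x hx => hcover x hx) hAne hBne
        rcases hsplit x hxI with h | h
        exacts [h2 h, h1 h]
      · right
        intro ξ hξ
        by_contra hne
        exact hAne ⟨ξ, hξ, hξ, hne⟩
    · left
      intro ξ hξ
      by_contra hne
      exact hBne ⟨ξ, hξ, hξ, hne⟩
  -- the main integration step, for a generic constant c
  have main : ∀ c : ℝ, c ≠ 0 →
      (∀ ξ ∈ I, f ξ * deriv (deriv f) ξ - (deriv f ξ)^2 = c * (deriv f ξ)^2) →
      ∃ a b : ℝ, a ≠ 0 ∧ (∀ ξ ∈ I, a * ξ + b = f ξ ^ (-c)) ∧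
        ∃ k : ℝ, 0 < k ∧ ∀ ξ ∈ I, φ ξ = k * f ξ ^ (((m:ℝ) + c)/((n:ℝ) - 2)) := by
    intro c hc hP
    have hgd : ∀ ξ ∈ I, HasDerivAt (fun x => f x ^ (-c)) (deriv f ξ * (-c) * f ξ ^ (-c-1)) ξ :=
      fun ξ hξ => (hf' ξ hξ).rpow_const (Or.inl (hfpos ξ hξ).ne')
    have hGd : ∀ ξ ∈ I, HasDerivAt (fun x => deriv f x * (-c) * f x ^ (-c-1)) 0 ξ := by
      intro ξ hξ
      have h1 : HasDerivAt (fun x => f x ^ (-c-1)) (deriv f ξ * (-c-1) * f ξ ^ (-c-1-1)) ξ :=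
        (hf' ξ hξ).rpow_const (Or.inl (hfpos ξ hξ).ne')
      have h2 : HasDerivAt (fun x => deriv f x * (-c)) (deriv (deriv f) ξ * (-c)) ξ :=
        (hf'' ξ hξ).mul_const _
      have h3 := h2.mul h1
      refine h3.congr_deriv (Eq.symm ?_)
      have h4 := Real.rpow_add_one (hfpos ξ hξ).ne' (-c-2)
      rw [show ((-c-2)+1:ℝ) = -c-1 by ring] at h4
      rw [show (-c-2:ℝ) = -c-1-1 by ring] at h4
      rw [h4]
      linear_combination (c * f ξ ^ (-c-1-1)) * hP ξ hξ
    set a := deriv f ξ₀ * (-c) * f ξ₀ ^ (-c-1) with ha_def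
    have haG : ∀ ξ ∈ I, deriv f ξ * (-c) * f ξ ^ (-c-1) = a := fun ξ hξ =>
      constOn_of_hasDerivAt_zero hIconv hGd hξ hξ₀
    have hane : a ≠ 0 := by
      have h1 := hfne ξ₀ hξ₀
      have h2 : f ξ₀ ^ (-c-1) ≠ 0 := (Real.rpow_pos_of_pos (hfpos ξ₀ hξ₀) _).ne'
      exact mul_ne_zero (mul_ne_zero h1 (neg_ne_zero.2 hc)) h2
    set b : ℝ := f ξ₀ ^ (-c) - a * ξ₀ with hb
    have haff : ∀ ξ ∈ I, a * ξ + b = f ξ ^ (-c) := by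
      intro ξ hξ
      have h1 : ∀ x ∈ I, HasDerivAt (fun y => f y ^ (-c) - a * y) 0 x := by
        intro x hx
        have h2 := (hgd x hx).sub ((hasDerivAt_id x).const_mul a)
        rw [haG x hx] at h2
        refine h2.congr_deriv (Eq.symm ?_)
        ring
      have h3 : f ξ ^ (-c) - a * ξ = f ξ₀ ^ (-c) - a * ξ₀ :=
        constOn_of_hasDerivAt_zero hIconv h1 hξ hξ₀
      rw [hb]; linarith [h3]
    have hφf : ∀ ξ ∈ I, f ξ * deriv φ ξ * ((n:ℝ)-2) = ((m:ℝ)+c) * (φ ξ * deriv f ξ) := by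
      intro ξ hξ
      obtain ⟨e1, e2, e3⟩ := hODE ξ hξ
      have hp := hP ξ hξ
      have h1 : (φ ξ * deriv f ξ) *
          ((f ξ * deriv φ ξ * ((n:ℝ)-2)) - ((m:ℝ)+c) * (φ ξ * deriv f ξ)) = 0 := by
        linear_combination e3 + (φ ξ)^2 * hp
      have hne : φ ξ * deriv f ξ ≠ 0 := mul_ne_zero (hφpos ξ hξ).ne' (hfne ξ hξ)
      have h6 := (mul_eq_zero.1 h1).resolve_left hne
      linarith [h6]
    have hV : ∀ ξ ∈ I, f ξ * deriv φ ξ = (((m:ℝ)+c)/((n:ℝ)-2)) * (φ ξ * deriv f ξ) := by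
      intro ξ hξ
      rw [div_mul_eq_mul_div, eq_div_iff hn2pos.ne']
      linear_combination hφf ξ hξ
    set α : ℝ := ((m:ℝ)+c)/((n:ℝ)-2) with hα
    have hΦd : ∀ ξ ∈ I, HasDerivAt (fun x => φ x * f x ^ (-α)) 0 ξ := by
      intro ξ hξ
      have h1 : HasDerivAt (fun x => f x ^ (-α)) (deriv f ξ * (-α) * f ξ ^ (-α-1)) ξ :=
        (hf' ξ hξ).rpow_const (Or.inl (hfpos ξ hξ).ne')
      have h2 := (hφ' ξ hξ).mul h1
      refine h2.congr_deriv (Eq.symm ?_)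
      have h4 := Real.rpow_add_one (hfpos ξ hξ).ne' (-α-1)
      rw [show ((-α-1)+1:ℝ) = -α by ring] at h4
      rw [h4]
      linear_combination (-(f ξ ^ (-α-1))) * hV ξ hξ
    set k : ℝ := φ ξ₀ * f ξ₀ ^ (-α) with hkdef
    have hkpos : 0 < k := mul_pos (hφpos ξ₀ hξ₀) (Real.rpow_pos_of_pos (hfpos ξ₀ hξ₀) _)
    refine ⟨a, b, hane, haff, k, hkpos, ?_⟩
    intro ξ hξ
    have h3 : φ ξ * f ξ ^ (-α) = k := constOn_of_hasDerivAt_zero hIconv hΦd hξ hξ₀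
    have h5 : f ξ ^ (-α) * f ξ ^ α = 1 := by
      rw [← Real.rpow_add (hfpos ξ hξ)]; norm_num
    calc φ ξ = φ ξ * (f ξ ^ (-α) * f ξ ^ α) := by rw [h5, mul_one]
      _ = (φ ξ * f ξ ^ (-α)) * f ξ ^ α := by ring
      _ = k * f ξ ^ α := by rw [h3]
  have hgen : ∀ y : ℝ, (-β) * (-(y/β)) = y := fun y => by
    rw [neg_mul_neg, mul_comm, div_mul_cancel₀ _ hβpos.ne']
  have hgen2 : ∀ y : ℝ, β * (y/β) = y := fun y => by
    rw [mul_comm, div_mul_cancel₀ _ hβpos.ne']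
  rcases hdichot with hcase | hcase
  · obtain ⟨a, b, ha, hab, k, hk, hφk⟩ := main β hβpos.ne' hcase
    have hval : ∀ ξ : ℝ, -(β * (-a/β * ξ + -b/β)) = a*ξ+b := by
      intro ξ; field_simp; try ring
    refine ⟨k, -a/β, -b/β, hk, div_ne_zero (neg_ne_zero.2 ha) hβpos.ne', Or.inl ⟨?_, ?_, ?_⟩⟩
    · intro ξ hξ
      rw [hval ξ, hab ξ hξ]
      exact Real.rpow_pos_of_pos (hfpos ξ hξ) _
    · intro ξ hξ
      rw [hval ξ, hab ξ hξ, ← Real.rpow_mul (hfpos ξ hξ).le, hgen]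
      exact hφk ξ hξ
    · intro ξ hξ
      rw [hval ξ, hab ξ hξ, ← Real.rpow_mul (hfpos ξ hξ).le, hgen 1, Real.rpow_one]
  · obtain ⟨a, b, ha, hab, k, hk, hφk⟩ := main (-β) (by simpa using hβpos.ne') hcase
    have hab' : ∀ ξ ∈ I, a*ξ+b = f ξ ^ (β:ℝ) := by
      intro ξ hξ
      simpa using hab ξ hξ
    have hφk' : ∀ ξ ∈ I, φ ξ = k * f ξ ^ (((m:ℝ) - β)/((n:ℝ)-2)) := by
      intro ξ hξ
      rw [show ((m:ℝ) - β)/((n:ℝ)-2) = ((m:ℝ) + -β)/((n:ℝ)-2) by ring]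
      exact hφk ξ hξ
    have hval : ∀ ξ : ℝ, β * (a/β * ξ + b/β) = a*ξ+b := by
      intro ξ; field_simp; try ring
    refine ⟨k, a/β, b/β, hk, div_ne_zero ha hβpos.ne', Or.inr ⟨?_, ?_, ?_⟩⟩
    · intro ξ hξ
      rw [hval ξ, hab' ξ hξ]
      exact Real.rpow_pos_of_pos (hfpos ξ hξ) _
    · intro ξ hξ
      rw [hval ξ, hab' ξ hξ, ← Real.rpow_mul (hfpos ξ hξ).le, hgen2]
      exact hφk' ξ hξ
    · intro ξ hξ
      rw [hval ξ, hab' ξ hξ, ← Real.rpow_mul (hfpos ξ hξ).le, hgen2 1, Real.rpow_one]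
end

section
/- Let n ≥ 3 be an integer, I ⊆ ℝ an open interval, and φ, f : I → ℝ smooth functions with φ > 0, f > 0 and φ'(ξ) ≠ 0 for all ξ ∈ I. If (φ, f) satisfies the Ricci-flat warped-product ODE system of dimension (n, 1) at every point of I, then there exists a constant k > 0 such that f(ξ) = k·φ(ξ)^{(n−2)/2} for all ξ ∈ I. -/
/-- Equation (2.9) in the proof of Theorem 1.3: `f = k·φ^((n−2)/2)`. -/
theorem theorem_1_3_step (n : ℕ) (hn : 3 ≤ n) (I : Set ℝ) (hIopen : IsOpen I)
    (hIconv : Convex ℝ I) (φ f : ℝ → ℝ)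
    (hφ : ContDiffOn ℝ (⊤ : ℕ∞) φ I) (hf : ContDiffOn ℝ (⊤ : ℕ∞) f I)
    (hφpos : ∀ ξ ∈ I, 0 < φ ξ) (hfpos : ∀ ξ ∈ I, 0 < f ξ)
    (hφ' : ∀ ξ ∈ I, deriv φ ξ ≠ 0)
    (hODE : WarpedODE n 1 φ f I) :
    ∃ k : ℝ, 0 < k ∧ ∀ ξ ∈ I, f ξ = k * (φ ξ) ^ (((n : ℝ) - 2) / 2) := by
  rcases Set.eq_empty_or_nonempty I with hI | ⟨x0, hx0⟩
  · exact ⟨1, one_pos, by simp [hI]⟩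
  set c : ℝ := ((n : ℝ) - 2) / 2 with hc
  -- the key pointwise relation
  have key : ∀ ξ ∈ I, φ ξ * deriv f ξ = c * f ξ * deriv φ ξ := by
    intro ξ hξ
    obtain ⟨h1, h2, h3⟩ := hODE ξ hξ
    have ha := (hφpos ξ hξ).ne'
    have hb := (hfpos ξ hξ).ne'
    have ha' := hφ' ξ hξ
    have hn1 : (n : ℝ) - 1 ≠ 0 := by
      have : (3 : ℝ) ≤ (n : ℝ) := by exact_mod_cast hn
      linarith
    push_cast at h1 h2 h3
    have hzero : ((n : ℝ) - 1) * f ξ * deriv φ ξ *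
        (2 * (φ ξ * deriv f ξ) - ((n : ℝ) - 2) * f ξ * deriv φ ξ) = 0 := by
      linear_combination (((n : ℝ) - 2) * f ξ) * h2 - (φ ξ * f ξ) * h1 + h3
    have hfac : 2 * (φ ξ * deriv f ξ) - ((n : ℝ) - 2) * f ξ * deriv φ ξ = 0 := by
      rcases mul_eq_zero.1 hzero with h | h
      · exact (mul_ne_zero (mul_ne_zero hn1 hb) ha' h).elim
      · exact h
    have hc' : c = ((n : ℝ) - 2) / 2 := hc
    rw [hc']; linarith
  -- quotient has zero derivative
  have hderiv : ∀ ξ ∈ I, HasDerivAt (fun x => f x / φ x ^ c) 0 ξ := by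
    intro ξ hξ
    have hmem := hIopen.mem_nhds hξ
    have hφd : HasDerivAt φ (deriv φ ξ) ξ :=
      (((hφ.differentiableOn (by norm_num)).differentiableAt hmem)).hasDerivAt
    have hfd : HasDerivAt f (deriv f ξ) ξ :=
      (((hf.differentiableOn (by norm_num)).differentiableAt hmem)).hasDerivAt
    have hapos := hφpos ξ hξ
    have hpow : HasDerivAt (fun x => φ x ^ c) (deriv φ ξ * c * φ ξ ^ (c - 1)) ξ :=
      hφd.rpow_const (Or.inl hapos.ne')
    have hpowpos : (0 : ℝ) < φ ξ ^ c := Real.rpow_pos_of_pos hapos c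
    have hdiv := hfd.div hpow hpowpos.ne'
    have hsplit : φ ξ ^ (c - 1) * φ ξ = φ ξ ^ c := by
      rw [← Real.rpow_add_one hapos.ne']; norm_num
    have h0 : (deriv f ξ * φ ξ ^ c - f ξ * (deriv φ ξ * c * φ ξ ^ (c - 1))) / (φ ξ ^ c) ^ 2
        = 0 := by
      rw [div_eq_zero_iff]
      left
      rw [← hsplit]
      linear_combination (φ ξ ^ (c - 1)) * (key ξ hξ)
    exact h0 ▸ hdiv
  -- constancy
  have hdiffOn : DifferentiableOn ℝ (fun x => f x / φ x ^ c) I := fun x hx =>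
    ((hderiv x hx).differentiableAt).differentiableWithinAt
  have hconst : ∀ ξ ∈ I, f ξ / φ ξ ^ c = f x0 / φ x0 ^ c := by
    intro ξ hξ
    apply hIconv.is_const_of_fderivWithin_eq_zero hdiffOn _ hξ hx0
    intro x hx
    have : fderiv ℝ (fun x => f x / φ x ^ c) x = 0 := by
      have := (hderiv x hx).hasFDerivAt.fderiv
      rw [this]; ext y; simp
    rw [fderivWithin_of_isOpen hIopen hx, this]
  have hb0 := hfpos x0 hx0
  have ha0 := hφpos x0 hx0
  refine ⟨f x0 / φ x0 ^ c, by positivity, fun ξ hξ => ?_⟩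
  have := hconst ξ hξ
  have hpos := Real.rpow_pos_of_pos (hφpos ξ hξ) c
  field_simp at this ⊢
  linarith [this]
end

section
/- Let n ≥ 3 and m ≥ 2 be integers, I ⊆ ℝ an open interval, and φ, f : I → ℝ smooth functions with φ > 0 and f > 0 on I. If (φ, f) satisfies the Ricci-flat warped-product ODE system of dimension (n, m) at every point of I, then (n−1)(n−2)·f(ξ)²·(φ'(ξ))² − 2m(n−1)·φ(ξ)·f(ξ)·φ'(ξ)·f'(ξ) + m(m−1)·φ(ξ)²·(f'(ξ))² = 0 for all ξ ∈ I. -/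
/-- The quadratic relation between logarithmic derivatives in the proof of Theorem 1.4,
after clearing denominators by `(n−2)·φ²·f²`. -/
theorem theorem_1_4_quadratic (n m : ℕ) (hn : 3 ≤ n) (hm : 2 ≤ m)
    (I : Set ℝ) (hIopen : IsOpen I) (hIconv : Convex ℝ I) (φ f : ℝ → ℝ)
    (hφ : ContDiffOn ℝ (⊤ : ℕ∞) φ I) (hf : ContDiffOn ℝ (⊤ : ℕ∞) f I)
    (hφpos : ∀ ξ ∈ I, 0 < φ ξ) (hfpos : ∀ ξ ∈ I, 0 < f ξ)
    (hODE : WarpedODE n m φ f I) :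
    ∀ ξ ∈ I,
      ((n : ℝ) - 1) * ((n : ℝ) - 2) * (f ξ) ^ 2 * (deriv φ ξ) ^ 2
      - 2 * (m : ℝ) * ((n : ℝ) - 1) * φ ξ * f ξ * deriv φ ξ * deriv f ξ
      + (m : ℝ) * ((m : ℝ) - 1) * (φ ξ) ^ 2 * (deriv f ξ) ^ 2 = 0 := by
  intro ξ hξ
  obtain ⟨h1, h2, h3⟩ := hODE ξ hξ
  have hφne : φ ξ ≠ 0 := (hφpos ξ hξ).ne'
  have key : φ ξ * (((n : ℝ) - 1) * ((n : ℝ) - 2) * (f ξ) ^ 2 * (deriv φ ξ) ^ 2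
      - 2 * (m : ℝ) * ((n : ℝ) - 1) * φ ξ * f ξ * deriv φ ξ * deriv f ξ
      + (m : ℝ) * ((m : ℝ) - 1) * (φ ξ) ^ 2 * (deriv f ξ) ^ 2) = 0 := by
    linear_combination (f ξ * (φ ξ) ^ 2) * h1 - (((n : ℝ) - 2) * f ξ * φ ξ) * h2
      - ((m : ℝ) * φ ξ) * h3
  rcases mul_eq_zero.mp key with h | h
  · exact absurd h hφne
  · exact h
end

section
/- Let n ≥ 3 and m ≥ 2 be integers, I ⊆ ℝ an open interval, and φ, f : I → ℝ smooth functions with φ > 0 and f > 0 on I. If (φ, f) satisfies the Ricci-flat warped-product ODE system of dimension (n, m) at every point of I, then for every ξ ∈ I one has (n−1)(n−2)·φ'(ξ)·f(ξ) = (m(n−1) + √(m(n−1)(m+n−2)))·φ(ξ)·f'(ξ) or (n−1)(n−2)·φ'(ξ)·f(ξ) = (m(n−1) − √(m(n−1)(m+n−2)))·φ(ξ)·f'(ξ). -/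
/-- The pointwise root relation
`φ'/φ = ((m(n−1) ± √(m(n−1)(m+n−2)))/((n−1)(n−2)))·(f'/f)`
in the proof of Theorem 1.4, written without denominators. -/
theorem theorem_1_4_roots (n m : ℕ) (hn : 3 ≤ n) (hm : 2 ≤ m)
    (I : Set ℝ) (hIopen : IsOpen I) (hIconv : Convex ℝ I) (φ f : ℝ → ℝ)
    (hφ : ContDiffOn ℝ (⊤ : ℕ∞) φ I) (hf : ContDiffOn ℝ (⊤ : ℕ∞) f I)
    (hφpos : ∀ ξ ∈ I, 0 < φ ξ) (hfpos : ∀ ξ ∈ I, 0 < f ξ)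
    (hODE : WarpedODE n m φ f I) :
    ∀ ξ ∈ I,
      ((n : ℝ) - 1) * ((n : ℝ) - 2) * deriv φ ξ * f ξ
        = ((m : ℝ) * ((n : ℝ) - 1)
            + Real.sqrt ((m : ℝ) * ((n : ℝ) - 1) * ((m : ℝ) + (n : ℝ) - 2)))
          * φ ξ * deriv f ξ ∨
      ((n : ℝ) - 1) * ((n : ℝ) - 2) * deriv φ ξ * f ξ
        = ((m : ℝ) * ((n : ℝ) - 1)
            - Real.sqrt ((m : ℝ) * ((n : ℝ) - 1) * ((m : ℝ) + (n : ℝ) - 2)))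
          * φ ξ * deriv f ξ := by
  intro ξ hξ
  obtain ⟨h1, h2, h3⟩ := hODE ξ hξ
  have hn' : (3 : ℝ) ≤ (n : ℝ) := by exact_mod_cast hn
  have hm' : (2 : ℝ) ≤ (m : ℝ) := by exact_mod_cast hm
  set a := φ ξ with ha
  set b := f ξ with hb
  set p := deriv φ ξ with hp
  set q := deriv f ξ with hq
  set N := (n : ℝ) with hN
  set M := (m : ℝ) with hM
  -- eliminate second derivatives
  have key : (N - 1) * (N - 2) * (p * b) ^ 2
      - 2 * M * (N - 1) * (p * b) * (a * q) + M * (M - 1) * (a * q) ^ 2 = 0 := by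
    linear_combination (a * b) * h1 - ((N - 2) * b) * h2 - M * h3
  have hD : (0 : ℝ) ≤ M * (N - 1) * (M + N - 2) := by
    have h0 : (0:ℝ) < M * (N - 1) := by nlinarith
    nlinarith
  set s := Real.sqrt (M * (N - 1) * (M + N - 2)) with hs
  have hs2 : s ^ 2 = M * (N - 1) * (M + N - 2) := Real.sq_sqrt hD
  have hfac :
      ((N - 1) * (N - 2) * p * b - (M * (N - 1) + s) * a * q) *
        ((N - 1) * (N - 2) * p * b - (M * (N - 1) - s) * a * q) = 0 := by
    linear_combination ((N - 1) * (N - 2)) * key - (a * q) ^ 2 * hs2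
  rcases mul_eq_zero.mp hfac with h | h
  · left; linarith
  · right; linarith
end
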